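/- arXiv:1304.3972 — 10 statements merged into one kernel-verified Lean document; each statement's English description precedes it below -/
import Mathlib

section
/- Let m ≥ 2, let a₁,…,a_{m−1} be real numbers, and let p(s) = s^{m−1} + a_{m−1}s^{m−2} + ⋯ + a₂s + a₁. Suppose every complex root of p has negative real part. Let f : ℝ → ℝ be continuous with lim_{t→∞} f(t) = f*, and let r : ℝ → ℝ be (m−1)-times differentiable with r^{(m−1)}(t) + a_{m−1}r^{(m−2)}(t) + ⋯ + a₂ r′(t) + a₁ r(t) = f(t) for all t ≥ 0. Then lim_{t→∞} r(t) = f*/a₁ and lim_{t→∞} r^{(i)}(t) = 0 for every i = 1,…,m−2. -/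
open Filter Topology Polynomial

/-!
Over `ℂ` the characteristic polynomial factors as `∏ (X - μₖ)` with `Re μₖ < 0`. If `q` is a
partial product and `u = q(d/dt) y`, then `u' - μ u = ((X - μ) q)(d/dt) y`; so once the full
product applied to `y` tends to `0`, peeling off one factor at a time gives `u → 0` at every
stage, by a Lyapunov estimate for `‖u‖²` and Grönwall's inequality. The top derivative of `y`
at each stage is `u` minus lower-order terms, so every `y⁽ⁱ⁾`, `i < deg`, tends to `0`. The theorem
is this applied to the complexification of `r - f* / a₁`.
-/

theorem tendsto_gronwallBound_atTop {K : ℝ} (hK : K < 0) (δ ε : ℝ) :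
    Tendsto (gronwallBound δ K ε) atTop (𝓝 (-ε / K)) := by
  rw [gronwallBound_of_K_ne_0 hK.ne]
  have hexp : Tendsto (fun x => Real.exp (K * x)) atTop (𝓝 0) :=
    Real.tendsto_exp_atBot.comp (tendsto_id.const_mul_atTop_of_neg hK)
  convert (hexp.const_mul δ).add ((hexp.sub_const 1).const_mul (ε / K)) using 2
  ring

theorem tendsto_zero_of_hasDerivAt_le_neg_mul_add {g g' b : ℝ → ℝ} {c : ℝ} (hc : 0 < c)
    (hg₀ : ∀ t, 0 ≤ g t) (hg : ∀ t, HasDerivAt g (g' t) t)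
    (hle : ∀ t, g' t ≤ -c * g t + b t) (hb : Tendsto b atTop (𝓝 0)) :
    Tendsto g atTop (𝓝 0) := by
  refine tendsto_order.2 ⟨fun a ha => .of_forall fun t => ha.trans_le (hg₀ t), fun ε hε => ?_⟩
  obtain ⟨T, hT⟩ :=
    eventually_atTop.1 (hb.eventually (ge_mem_nhds (by positivity : 0 < c * ε / 2)))
  have hbound : ∀ t ≥ T, g t ≤ gronwallBound (g T) (-c) (c * ε / 2) (t - T) := fun t ht =>
    le_gronwallBound_of_liminf_deriv_right_le (fun x _ => (hg x).continuousAt.continuousWithinAt)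
      (fun x _ _ hr => (hg x).hasDerivWithinAt.liminf_right_slope_le hr) le_rfl
      (fun x hx => (hle x).trans (by linarith [hT x hx.1])) t ⟨ht, le_rfl⟩
  have hlim :
      Tendsto (fun t => gronwallBound (g T) (-c) (c * ε / 2) (t - T)) atTop (𝓝 (ε / 2)) := by
    have h := (tendsto_gronwallBound_atTop (neg_lt_zero.2 hc) (g T) (c * ε / 2)).comp
      (tendsto_atTop_add_const_right _ (-T) tendsto_id)
    rwa [show -(c * ε / 2) / -c = ε / 2 by field_simp] at h
  filter_upwards [eventually_ge_atTop T, hlim.eventually (gt_mem_nhds (half_lt_self hε))]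
    with t ht hlt
  exact (hbound t ht).trans_lt hlt

theorem Complex.tendsto_zero_of_tendsto_deriv_sub_mul {w w' : ℝ → ℂ} {μ : ℂ} (hμ : μ.re < 0)
    (hw : ∀ t, HasDerivAt w (w' t) t) (h : Tendsto (fun t => w' t - μ * w t) atTop (𝓝 0)) :
    Tendsto w atTop (𝓝 0) := by
  set c := -μ.re
  have hc : 0 < c := neg_pos.2 hμ
  have hsq : Tendsto (fun t => ‖w t‖ ^ 2) atTop (𝓝 0) := by
    refine tendsto_zero_of_hasDerivAt_le_neg_mul_add hc (fun t => by positivity)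
      (fun t => (hw t).norm_sq) (b := fun t => ‖w' t - μ * w t‖ ^ 2 / c) (fun t => ?_) ?_
    -- `(‖w‖²)' = 2⟪w, w'⟫ = -2c‖w‖² + 2⟪w, w' - μ w⟫ ≤ -c‖w‖² + ‖w' - μ w‖² / c`
    · have hinner : inner ℝ (w t) (μ * w t) = -c * ‖w t‖ ^ 2 := by
        rw [Complex.inner, mul_assoc, Complex.mul_conj, ← Complex.sq_norm, Complex.re_mul_ofReal,
          neg_neg]
      have hcs := real_inner_le_norm (w t) (w' t - μ * w t)
      rw [inner_sub_right, hinner] at hcs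
      rw [div_eq_mul_inv]
      nlinarith [sq_nonneg (c * ‖w t‖ - ‖w' t - μ * w t‖), inv_mul_cancel₀ hc.ne']
    · simpa using (h.norm.pow 2).div_const c
  exact tendsto_zero_iff_norm_tendsto_zero.2 (by simpa using hsq.sqrt)

namespace Polynomial

/-- `p.applyDeriv y` is `p(d/dt) y`. -/
noncomputable def applyDeriv (p : ℂ[X]) (y : ℝ → ℂ) (t : ℝ) : ℂ :=
  p.sum fun j c => c * iteratedDeriv j y t

variable {p : ℂ[X]} {y : ℝ → ℂ}

theorem applyDeriv_eq_sum_range {N : ℕ} (hN : p.natDegree < N) (t : ℝ) :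
    p.applyDeriv y t = ∑ j ∈ Finset.range N, p.coeff j * iteratedDeriv j y t :=
  p.sum_over_range' (f := fun j c => c * iteratedDeriv j y t) (fun _ => zero_mul _) N hN

theorem Monic.applyDeriv_eq (hp : p.Monic) (t : ℝ) :
    p.applyDeriv y t = iteratedDeriv p.natDegree y t
      + ∑ j ∈ Finset.range p.natDegree, p.coeff j * iteratedDeriv j y t := by
  rw [applyDeriv_eq_sum_range p.natDegree.lt_succ_self, Finset.sum_range_succ, hp.coeff_natDegree,
    one_mul, add_comm]

theorem applyDeriv_const_add (c : ℂ) (t : ℝ) :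
    p.applyDeriv (fun s => c + y s) t = p.applyDeriv y t + p.coeff 0 * c := by
  simp only [applyDeriv_eq_sum_range p.natDegree.lt_succ_self, Finset.sum_range_succ',
    iteratedDeriv_const_add (Nat.succ_pos _), iteratedDeriv_zero]
  ring

theorem applyDeriv_X_sub_C_mul (μ : ℂ) (t : ℝ) :
    ((X - C μ) * p).applyDeriv y t = (X * p).applyDeriv y t - μ * p.applyDeriv y t := by
  have hdeg : ∀ q : ℂ[X], q.natDegree ≤ 1 → (q * p).natDegree < p.natDegree + 2 := fun q hq =>
    natDegree_mul_le.trans_lt (by omega)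
  rw [applyDeriv_eq_sum_range (hdeg _ (natDegree_X_sub_C μ).le),
    applyDeriv_eq_sum_range (hdeg _ natDegree_X_le),
    applyDeriv_eq_sum_range (by omega : p.natDegree < p.natDegree + 2), Finset.mul_sum,
    ← Finset.sum_sub_distrib]
  refine Finset.sum_congr rfl fun j _ => ?_
  rw [sub_mul, coeff_sub, coeff_C_mul]
  ring

theorem hasDerivAt_applyDeriv (hy : ∀ j ≤ p.natDegree, Differentiable ℝ (iteratedDeriv j y))
    (t : ℝ) : HasDerivAt (p.applyDeriv y) ((X * p).applyDeriv y t) t := by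
  have hp : p.applyDeriv y =
      fun s => ∑ j ∈ Finset.range (p.natDegree + 1), p.coeff j * iteratedDeriv j y s :=
    _root_.funext (applyDeriv_eq_sum_range p.natDegree.lt_succ_self)
  have hdeg : (X * p).natDegree < p.natDegree + 2 :=
    natDegree_mul_le.trans_lt (by linarith [natDegree_X_le (R := ℂ)])
  rw [hp, applyDeriv_eq_sum_range hdeg, Finset.sum_range_succ']
  simp only [coeff_X_mul, coeff_X_mul_zero, zero_mul, add_zero, iteratedDeriv_succ]
  exact HasDerivAt.fun_sum fun j hj =>
    ((hy j (Nat.lt_succ_iff.1 (Finset.mem_range.1 hj)) t).hasDerivAt.const_mul _)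

theorem tendsto_iteratedDeriv_of_tendsto_applyDeriv_prod (s : Multiset ℂ)
    (hs : ∀ μ ∈ s, μ.re < 0) (hy : ∀ j < Multiset.card s, Differentiable ℝ (iteratedDeriv j y))
    (h : Tendsto ((s.map fun μ => X - C μ).prod.applyDeriv y) atTop (𝓝 0)) :
    ∀ i < Multiset.card s, Tendsto (iteratedDeriv i y) atTop (𝓝 0) := by
  induction s using Multiset.induction_on with
  | empty => simp
  | cons μ s ih =>
    set q := (s.map fun μ => X - C μ).prod
    have hq : q.Monic := monic_multiset_prod_of_monic _ _ fun μ _ => monic_X_sub_C μ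
    have hqdeg : q.natDegree = Multiset.card s := natDegree_multiset_prod_X_sub_C_eq_card s
    rw [Multiset.card_cons] at hy
    have hu : Tendsto (q.applyDeriv y) atTop (𝓝 0) := by
      refine Complex.tendsto_zero_of_tendsto_deriv_sub_mul (hs μ (Multiset.mem_cons_self _ _))
        (hasDerivAt_applyDeriv fun j hj => hy j (by omega)) ?_
      rw [Multiset.map_cons, Multiset.prod_cons] at h
      exact h.congr (applyDeriv_X_sub_C_mul μ)
    have hlower := ih (fun ν hν => hs ν (Multiset.mem_cons_of_mem hν))
      (fun j hj => hy j (by omega)) hu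
    intro i hi
    rcases Nat.lt_succ_iff_lt_or_eq.1 (Multiset.card_cons μ s ▸ hi) with hi | rfl
    · exact hlower i hi
    · have htop := hu.sub (tendsto_finsetSum (Finset.range q.natDegree) fun j hj =>
        (hlower j (hqdeg ▸ Finset.mem_range.1 hj)).const_mul (q.coeff j))
      simp only [mul_zero, Finset.sum_const_zero, sub_zero] at htop
      rw [← hqdeg]
      refine htop.congr fun t => ?_
      rw [hq.applyDeriv_eq, add_sub_cancel_right]

theorem Monic.tendsto_iteratedDeriv_of_tendsto_applyDeriv (hp : p.Monic)
    (hroots : ∀ z ∈ p.roots, z.re < 0)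
    (hy : ∀ j < p.natDegree, Differentiable ℝ (iteratedDeriv j y))
    (h : Tendsto (p.applyDeriv y) atTop (𝓝 0)) :
    ∀ i < p.natDegree, Tendsto (iteratedDeriv i y) atTop (𝓝 0) := by
  rw [← prod_multiset_X_sub_C_of_monic_of_roots_card_eq hp IsAlgClosed.card_roots_eq_natDegree] at h
  rw [← IsAlgClosed.card_roots_eq_natDegree] at hy ⊢
  exact tendsto_iteratedDeriv_of_tendsto_applyDeriv_prod _ hroots hy h

theorem Monic.tendsto_of_tendsto_applyDeriv (hp : p.Monic) (hroots : ∀ z ∈ p.roots, z.re < 0)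
    (hy : ∀ j < p.natDegree, Differentiable ℝ (iteratedDeriv j y)) {L : ℂ}
    (h : Tendsto (p.applyDeriv y) atTop (𝓝 L)) :
    Tendsto y atTop (𝓝 (L / p.coeff 0)) ∧
      ∀ i, 0 < i → i < p.natDegree → Tendsto (iteratedDeriv i y) atTop (𝓝 0) := by
  have hcoeff : p.coeff 0 ≠ 0 := fun h0 => by
    simpa using hroots 0 ((mem_roots hp.ne_zero).2 (by rwa [IsRoot, ← coeff_zero_eq_eval_zero]))
  set c := L / p.coeff 0
  have hshift : ∀ j, 0 < j → iteratedDeriv j (fun s => -c + y s) = iteratedDeriv j y :=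
    fun j hj => _root_.funext fun t => iteratedDeriv_const_add hj _
  have hz : ∀ i < p.natDegree, Tendsto (iteratedDeriv i fun s => -c + y s) atTop (𝓝 0) := by
    refine hp.tendsto_iteratedDeriv_of_tendsto_applyDeriv hroots (fun j hj => ?_) ?_
    · rcases Nat.eq_zero_or_pos j with rfl | hj₀
      · simpa only [iteratedDeriv_zero] using (hy 0 hj).const_add (-c)
      · exact hshift j hj₀ ▸ hy j hj
    · have hL : p.coeff 0 * -c = -L := by rw [mul_neg, mul_div_cancel₀ _ hcoeff]
      have hshifted := h.add_const (-L)
      rw [add_neg_cancel] at hshifted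
      exact hshifted.congr fun t => by rw [applyDeriv_const_add, hL]
  refine ⟨?_, fun i hi₀ hi => hshift i hi₀ ▸ hz i hi⟩
  rcases Nat.eq_zero_or_pos p.natDegree with h0 | hpos
  · have hp1 : p.coeff 0 = 1 := h0 ▸ hp.coeff_natDegree
    have hpy : p.applyDeriv y = y := _root_.funext fun t => by simp [hp.applyDeriv_eq, h0]
    simpa [c, hp1, hpy] using h
  · simpa [iteratedDeriv_zero] using (hz 0 hpos).const_add c

section MonicOfCoeffs

variable {R : Type*} [Semiring R] (n : ℕ) (a : ℕ → R)

noncomputable def monicOfCoeffs : R[X] := X ^ n + ∑ i ∈ Finset.range n, C (a i) * X ^ i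

theorem degree_sum_C_mul_X_pow_lt :
    (∑ i ∈ Finset.range n, C (a i) * X ^ i).degree < (n : WithBot ℕ) := by
  refine (degree_sum_le _ _).trans_lt
    ((Finset.sup_lt_iff (WithBot.bot_lt_coe n)).2 fun i hi => ?_)
  exact (degree_C_mul_X_pow_le i (a i)).trans_lt (WithBot.coe_lt_coe.2 (Finset.mem_range.1 hi))

theorem monic_monicOfCoeffs : (monicOfCoeffs n a).Monic :=
  monic_X_pow_add (degree_sum_C_mul_X_pow_lt n a)

theorem natDegree_monicOfCoeffs [Nontrivial R] : (monicOfCoeffs n a).natDegree = n :=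
  natDegree_eq_of_degree_eq_some ((degree_add_eq_left_of_degree_lt
    ((degree_X_pow (R := R) n).symm ▸ degree_sum_C_mul_X_pow_lt n a)).trans (degree_X_pow n))

theorem coeff_monicOfCoeffs {j : ℕ} (hj : j < n) : (monicOfCoeffs n a).coeff j = a j := by
  simp [monicOfCoeffs, coeff_X_pow, hj.ne, hj]

theorem eval_monicOfCoeffs (z : R) :
    (monicOfCoeffs n a).eval z = z ^ n + ∑ i ∈ Finset.range n, a i * z ^ i := by
  simp [monicOfCoeffs, eval_finsetSum, eval_X_pow]

end MonicOfCoeffs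

end Polynomial

namespace Complex

theorem deriv_ofReal_comp (g : ℝ → ℝ) (t : ℝ) :
    deriv (fun s => (g s : ℂ)) t = ((deriv g t : ℝ) : ℂ) := by
  by_cases hg : DifferentiableAt ℝ g t
  · exact hg.hasDerivAt.ofReal_comp.deriv
  · have hg' : ¬DifferentiableAt ℝ (fun s => (g s : ℂ)) t := fun h => by
      have hre := reCLM.differentiableAt.comp t h
      rw [show ⇑reCLM ∘ (fun s => (g s : ℂ)) = g from _root_.funext fun s => by simp] at hre
      exact hg hre
    rw [deriv_zero_of_not_differentiableAt hg, deriv_zero_of_not_differentiableAt hg', ofReal_zero]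

theorem iteratedDeriv_ofReal_comp (g : ℝ → ℝ) (n : ℕ) :
    iteratedDeriv n (fun s => (g s : ℂ)) = fun s => ((iteratedDeriv n g s : ℝ) : ℂ) := by
  induction n with
  | zero => simp only [iteratedDeriv_zero]
  | succ n ih => simp only [iteratedDeriv_succ, ih]; exact _root_.funext (deriv_ofReal_comp _)

end Complex

theorem high_order_ode_convergence_general
    (m : ℕ) (hm : 2 ≤ m) (a : ℕ → ℝ)
    (hroots : ∀ z : ℂ,
      z ^ (m - 1) + ∑ i ∈ Finset.range (m - 1), (a (i + 1) : ℂ) * z ^ i = 0 → z.re < 0)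
    (f : ℝ → ℝ) (fstar : ℝ)
    (hflim : Tendsto f atTop (nhds fstar))
    (r : ℝ → ℝ) (hdiff : ∀ i < m - 1, Differentiable ℝ (iteratedDeriv i r))
    (hode : ∀ t : ℝ, 0 ≤ t →
      iteratedDeriv (m - 1) r t
        + ∑ i ∈ Finset.range (m - 1), a (i + 1) * iteratedDeriv i r t = f t) :
    Tendsto r atTop (nhds (fstar / a 1)) ∧
      ∀ i : ℕ, 1 ≤ i → i ≤ m - 2 → Tendsto (iteratedDeriv i r) atTop (nhds 0) := by
  set P : ℂ[X] := monicOfCoeffs (m - 1) fun i => (a (i + 1) : ℂ)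
  have hP : P.Monic := monic_monicOfCoeffs _ _
  have hdeg : P.natDegree = m - 1 := natDegree_monicOfCoeffs _ _
  have hR := Complex.iteratedDeriv_ofReal_comp r
  have hPR : ∀ t, 0 ≤ t → P.applyDeriv (fun s => (r s : ℂ)) t = f t := fun t ht => by
    rw [hP.applyDeriv_eq, ← hode t ht, hdeg]
    push_cast
    simp only [hR]
    congr 1
    exact Finset.sum_congr rfl fun j hj => by rw [coeff_monicOfCoeffs _ _ (Finset.mem_range.1 hj)]
  have hlim := hP.tendsto_of_tendsto_applyDeriv
    (fun z hz => hroots z (by simpa [P, eval_monicOfCoeffs] using isRoot_of_mem_roots hz))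
    (fun j hj => hR j ▸ Complex.ofRealCLM.differentiable.comp (hdiff j (hdeg ▸ hj)))
    ((Complex.continuous_ofReal.tendsto fstar).comp hflim |>.congr'
      (eventually_ge_atTop 0 |>.mono fun t ht => (hPR t ht).symm))
  rw [coeff_monicOfCoeffs _ _ (by omega), hdeg] at hlim
  refine ⟨?_, fun i hi₁ hi₂ => ?_⟩
  · simpa [Function.comp_def] using (Complex.continuous_re.tendsto _).comp hlim.1
  · simpa [hR, Function.comp_def] using
      (Complex.continuous_re.tendsto _).comp (hlim.2 i hi₁ (by omega))

/-- **Lemma 1 (sufficiency part).** If all complex roots of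
`s^(m-1) + a_{m-1} s^(m-2) + ⋯ + a₂ s + a₁` have negative real part, `f` is continuous with
`f(t) → f*`, and `r` is `(m-1)`-times differentiable and satisfies the ODE
`r^{(m-1)} + a_{m-1} r^{(m-2)} + ⋯ + a₁ r = f` on `[0,∞)`, then `r(t) → f*/a₁` and
`r^{(i)}(t) → 0` for `i = 1, …, m-2`. -/
theorem high_order_ode_convergence
    (m : ℕ) (hm : 2 ≤ m) (a : ℕ → ℝ)
    (hroots : ∀ z : ℂ,
      z ^ (m - 1) + ∑ i ∈ Finset.range (m - 1), (a (i + 1) : ℂ) * z ^ i = 0 → z.re < 0)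
    (f : ℝ → ℝ) (hfcont : Continuous f) (fstar : ℝ)
    (hflim : Tendsto f atTop (nhds fstar))
    (r : ℝ → ℝ) (hdiff : ∀ i < m - 1, Differentiable ℝ (iteratedDeriv i r))
    (hode : ∀ t : ℝ, 0 ≤ t →
      iteratedDeriv (m - 1) r t
        + ∑ i ∈ Finset.range (m - 1), a (i + 1) * iteratedDeriv i r t = f t) :
    Tendsto r atTop (nhds (fstar / a 1)) ∧
      ∀ i : ℕ, 1 ≤ i → i ≤ m - 2 → Tendsto (iteratedDeriv i r) atTop (nhds 0) :=
  high_order_ode_convergence_general m hm a hroots f fstar hflim r hdiff hode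
end

section
/- Let m ≥ 2, let a₁,…,a_{m−1} be real numbers, and let p(s) = s^{m−1} + a_{m−1}s^{m−2} + ⋯ + a₂s + a₁. Suppose some complex root of p has nonnegative real part. Then there exist a continuous function f : ℝ → ℝ having a finite limit as t → ∞ and an (m−1)-times continuously differentiable function r : ℝ → ℝ satisfying r^{(m−1)}(t) + a_{m−1}r^{(m−2)}(t) + ⋯ + a₂ r′(t) + a₁ r(t) = f(t) for all t ≥ 0, such that the ℝ^{m−1}-valued function t ↦ (r(t), r′(t), …, r^{(m−2)}(t)) does not converge as t → ∞. -/
/-!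
For a root `z` of the characteristic polynomial, `t ↦ Re e^{zt}` solves the homogeneous
equation. When `Re z ≥ 0` and `z ≠ 0` it does not converge: it is `e^{(Re z) t} cos((Im z) t)`
with `e^{(Re z) t} ≥ 1` for `t ≥ 0`, so it tends to `∞` if `z` is real and otherwise takes values
`≥ 1` and `≤ -1` at arbitrarily large times. The root `z = 0` means `a₁ = 0`, and then `r(t) = t`
solves the equation with a constant right-hand side.
-/

open Filter Topology Real
open scoped Complex

theorem iteratedDeriv_re_comp_ofReal {f : ℂ → ℂ} (hf : Differentiable ℂ f) (k : ℕ) :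
    iteratedDeriv k (fun x : ℝ => (f x).re) = fun x : ℝ => (iteratedDeriv k f x).re := by
  induction k with
  | zero => simp
  | succ k ih =>
    ext x
    rw [iteratedDeriv_succ, ih, iteratedDeriv_succ]
    exact ((hf.contDiff (n := ⊤).differentiable_iteratedDeriv k (by simp)) x).hasDerivAt
      |>.real_of_complex.deriv

theorem re_cexp_mul_ofReal_solves_ode {n : ℕ} {a : ℕ → ℝ} {z : ℂ}
    (hz : z ^ n + ∑ i ∈ Finset.range n, (a (i + 1) : ℂ) * z ^ i = 0) (t : ℝ) :
    iteratedDeriv n (fun t : ℝ => (cexp (z * t)).re) t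
      + ∑ i ∈ Finset.range n, a (i + 1) * iteratedDeriv i (fun t : ℝ => (cexp (z * t)).re) t
      = 0 := by
  have hexp : Differentiable ℂ fun s : ℂ => cexp (z * s) := by fun_prop
  simp only [iteratedDeriv_re_comp_ofReal hexp, iteratedDeriv_cexp_const_mul]
  calc _ = ((z ^ n + ∑ i ∈ Finset.range n, (a (i + 1) : ℂ) * z ^ i) * cexp (z * t)).re := by
        simp [add_mul, Finset.sum_mul, Complex.re_sum, mul_assoc]
    _ = 0 := by rw [hz, zero_mul, Complex.zero_re]

theorem not_tendsto_mul_cos {g : ℝ → ℝ} (hg : ∀ᶠ t in atTop, 1 ≤ g t) {ω : ℝ} (hω : 0 < ω)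
    (c : ℝ) : ¬ Tendsto (fun t => g t * cos (ω * t)) atTop (𝓝 c) := by
  intro h
  set crest : ℕ → ℝ := fun k => k * (2 * π) / ω
  set trough : ℕ → ℝ := fun k => (k * (2 * π) + π) / ω
  have hperiods : Tendsto (fun k : ℕ => k * (2 * π)) atTop atTop :=
    tendsto_natCast_atTop_atTop.atTop_mul_const (by positivity)
  have hcrest : Tendsto crest atTop atTop := hperiods.atTop_div_const hω
  have htrough : Tendsto trough atTop atTop :=
    (tendsto_atTop_add_const_right _ π hperiods).atTop_div_const hω
  have hcrest_ge : ∀ᶠ k in atTop, 1 ≤ g (crest k) * cos (ω * crest k) := by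
    filter_upwards [hcrest.eventually hg] with k hk
    simpa [crest, mul_div_cancel₀ _ hω.ne'] using hk
  have htrough_le : ∀ᶠ k in atTop, g (trough k) * cos (ω * trough k) ≤ -1 := by
    filter_upwards [htrough.eventually hg] with k hk
    simpa [trough, mul_div_cancel₀ _ hω.ne'] using hk
  linarith [ge_of_tendsto (h.comp hcrest) hcrest_ge, le_of_tendsto (h.comp htrough) htrough_le]

theorem not_tendsto_re_cexp_mul_ofReal {z : ℂ} (hz : z ≠ 0) (hre : 0 ≤ z.re) (c : ℝ) :
    ¬ Tendsto (fun t : ℝ => (cexp (z * t)).re) atTop (𝓝 c) := by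
  have hform : (fun t : ℝ => (cexp (z * t)).re)
      = fun t => Real.exp (z.re * t) * cos (|z.im| * t) := by
    ext t
    rcases abs_choice z.im with h | h <;> simp [Complex.exp_re, h]
  rw [hform]
  rcases eq_or_ne z.im 0 with him | him
  · have hpos : 0 < z.re := hre.lt_of_ne fun h => hz (Complex.ext h.symm him)
    simpa [him, Function.comp_def] using not_tendsto_nhds_of_tendsto_atTop
      (Real.tendsto_exp_atTop.comp (tendsto_id.const_mul_atTop hpos)) c
  · refine not_tendsto_mul_cos ?_ (abs_pos.2 him) c
    filter_upwards [eventually_ge_atTop 0] with t ht using Real.one_le_exp (mul_nonneg hre ht)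

theorem fun_id_ode_lhs_eq_of_root_zero {n : ℕ} {a : ℕ → ℝ}
    (h0 : (0 : ℂ) ^ n + ∑ i ∈ Finset.range n, (a (i + 1) : ℂ) * 0 ^ i = 0) (t : ℝ) :
    iteratedDeriv n (fun s : ℝ => s) t
        + ∑ i ∈ Finset.range n, a (i + 1) * iteratedDeriv i (fun s : ℝ => s) t
      = iteratedDeriv n (fun s : ℝ => s) 0
        + ∑ i ∈ Finset.range n, a (i + 1) * iteratedDeriv i (fun s : ℝ => s) 0 := by
  obtain _ | n := n
  · simp at h0
  have ha : a 1 = 0 := by simpa [Finset.sum_range_succ'] using h0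
  simp [Finset.sum_range_succ', iteratedDeriv_fun_id, ha]

theorem not_tendsto_iteratedDeriv_vector {n : ℕ} (hn : n ≠ 0) {r : ℝ → ℝ}
    (hr : ∀ c, ¬ Tendsto r atTop (𝓝 c)) :
    ¬ ∃ v : Fin n → ℝ, Tendsto (fun t (i : Fin n) => iteratedDeriv (i : ℕ) r t) atTop (𝓝 v) := by
  rintro ⟨v, hv⟩
  exact hr _ (by simpa using tendsto_pi_nhds.1 hv ⟨0, Nat.pos_of_ne_zero hn⟩)

/-- **Lemma 1 (necessity part).** If some complex root of
`s^(m-1) + a_{m-1} s^(m-2) + ⋯ + a₂ s + a₁` has nonnegative real part, then there exist a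
continuous `f` with a finite limit at `∞` and an `(m-1)`-times continuously differentiable `r`
solving the ODE on `[0,∞)` such that `(r, r', …, r^{(m-2)})` does not converge as `t → ∞`. -/
theorem high_order_ode_nonconvergence
    (m : ℕ) (hm : 2 ≤ m) (a : ℕ → ℝ)
    (hroot : ∃ z : ℂ,
      z ^ (m - 1) + ∑ i ∈ Finset.range (m - 1), (a (i + 1) : ℂ) * z ^ i = 0 ∧ 0 ≤ z.re) :
    ∃ (f : ℝ → ℝ) (fstar : ℝ) (r : ℝ → ℝ),
      Continuous f ∧ Tendsto f atTop (nhds fstar) ∧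
      ContDiff ℝ (m - 1 : ℕ) r ∧
      (∀ t : ℝ, 0 ≤ t →
        iteratedDeriv (m - 1) r t
          + ∑ i ∈ Finset.range (m - 1), a (i + 1) * iteratedDeriv i r t = f t) ∧
      ¬ ∃ v : Fin (m - 1) → ℝ,
          Tendsto (fun t : ℝ => fun i : Fin (m - 1) => iteratedDeriv (i : ℕ) r t)
            atTop (nhds v) := by
  obtain ⟨z, hz, hre⟩ := hroot
  have hm1 : m - 1 ≠ 0 := by omega
  rcases eq_or_ne z 0 with rfl | hz0
  · exact ⟨_, _, fun s => s, continuous_const, tendsto_const_nhds, contDiff_id,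
      fun t _ => fun_id_ode_lhs_eq_of_root_zero hz t,
      not_tendsto_iteratedDeriv_vector hm1 (not_tendsto_nhds_of_tendsto_atTop tendsto_id)⟩
  · exact ⟨fun _ => 0, 0, _, continuous_const, tendsto_const_nhds,
      Complex.reCLM.contDiff.comp (contDiff_const.mul Complex.ofRealCLM.contDiff).cexp,
      fun t _ => re_cexp_mul_ofReal_solves_ode hz t,
      not_tendsto_iteratedDeriv_vector hm1 (not_tendsto_re_cexp_mul_ofReal hz0 hre)⟩
end

section
/- Let m ≥ 2, let b₁,…,b_{m−1} be real numbers, and let q(s) = s^{m−1} + b_{m−1}s^{m−2} + ⋯ + b₂s + b₁. Suppose every complex root of q has modulus strictly less than 1. Let f : ℕ → ℝ be a sequence with lim_{k→∞} f[k] = f*, and let r : ℕ → ℝ satisfy r[k+m−1] + b_{m−1}r[k+m−2] + ⋯ + b₂ r[k+1] + b₁ r[k] = f[k] for all k ∈ ℕ. Then lim_{k→∞} r[k] = f*/(1 + b₁ + ⋯ + b_{m−1}). -/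
/-!
Write the recurrence as `q(S) r = f`, where `S` is the left shift on sequences and `q` is the
characteristic polynomial, viewed over `ℂ`. Over `ℂ`, `q` splits as `c ∏ (X - λᵢ)` with every
`|λᵢ| < 1`. Peel off one factor at a time. If `p(S) ((S - λ) r) → L`, then by induction
`r (k + 1) - λ r k → M := L / p(1)`. For a first-order recurrence with `|λ| < 1`
the error `e k = r k - M / (1 - λ)` satisfies `e (k + 1) = λ e k + o(1)`, so `e k → 0`. Hence
`r → L / ((1 - λ) p(1))`.
-/

open Filter Topology Polynomial

theorem tendsto_zero_of_succ_le_mul_add {u d : ℕ → ℝ} {c : ℝ} (hu : ∀ k, 0 ≤ u k)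
    (hc₀ : 0 ≤ c) (hc₁ : c < 1) (hd : Tendsto d atTop (𝓝 0))
    (h : ∀ k, u (k + 1) ≤ c * u k + d k) : Tendsto u atTop (𝓝 0) := by
  refine tendsto_order.2 ⟨fun a ha => .of_forall fun k => ha.trans_le (hu k), fun ε hε => ?_⟩
  obtain ⟨N, hN⟩ := eventually_atTop.1 (hd.eventually (ge_mem_nhds
    (show 0 < ε / 2 * (1 - c) by nlinarith)))
  have tail : ∀ j, u (N + j) ≤ c ^ j * u N + ε / 2 := by
    intro j
    induction j with
    | zero => simp; linarith
    | succ j ih =>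
      calc u (N + j + 1) ≤ c * u (N + j) + ε / 2 * (1 - c) := by
            linarith [h (N + j), hN (N + j) (by omega)]
        _ ≤ c * (c ^ j * u N + ε / 2) + ε / 2 * (1 - c) := by gcongr
        _ = c ^ (j + 1) * u N + ε / 2 := by ring
  have hgeo : Tendsto (fun j => c ^ j * u N) atTop (𝓝 0) := by
    simpa using (tendsto_pow_atTop_nhds_zero_of_lt_one hc₀ hc₁).mul_const (u N)
  obtain ⟨J, hJ⟩ := eventually_atTop.1 (hgeo.eventually (gt_mem_nhds (half_pos hε)))
  refine eventually_atTop.2 ⟨N + J, fun k hk => ?_⟩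
  obtain ⟨j, rfl⟩ := Nat.exists_eq_add_of_le (show N ≤ k by omega)
  linarith [tail j, hJ j (by omega)]

section NormedField

variable {𝕜 : Type*} [NormedField 𝕜]

theorem tendsto_zero_of_succ_eq_mul_add {e d : ℕ → 𝕜} {a : 𝕜} (ha : ‖a‖ < 1)
    (hd : Tendsto d atTop (𝓝 0)) (he : ∀ k, e (k + 1) = a * e k + d k) :
    Tendsto e atTop (𝓝 0) := by
  rw [tendsto_zero_iff_norm_tendsto_zero] at hd ⊢
  refine tendsto_zero_of_succ_le_mul_add (fun k => norm_nonneg _) (norm_nonneg a) ha hd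
    fun k => ?_
  rw [he, ← norm_mul]
  exact norm_add_le _ _

theorem tendsto_div_one_sub_of_tendsto_succ_sub_mul {r : ℕ → 𝕜} {a M : 𝕜} (ha : ‖a‖ < 1)
    (h : Tendsto (fun k => r (k + 1) - a * r k) atTop (𝓝 M)) :
    Tendsto r atTop (𝓝 (M / (1 - a))) := by
  have ha' : 1 - a ≠ 0 := fun h1 => by simp [(sub_eq_zero.1 h1).symm] at ha
  have hfix : M / (1 - a) * (1 - a) = M := div_mul_cancel₀ M ha'
  have hd : Tendsto (fun k => r (k + 1) - a * r k - M) atTop (𝓝 0) := by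
    simpa using h.sub_const M
  have he := tendsto_zero_of_succ_eq_mul_add ha hd (e := fun k => r k - M / (1 - a))
    fun k => by linear_combination -hfix
  simpa using he.add_const (M / (1 - a))

variable (𝕜) in
def seqShift : Module.End 𝕜 (ℕ → 𝕜) := LinearMap.funLeft 𝕜 𝕜 Nat.succ

theorem seqShift_pow_apply (i : ℕ) (r : ℕ → 𝕜) (k : ℕ) : (seqShift 𝕜 ^ i) r k = r (k + i) := by
  induction i generalizing r with
  | zero => rfl
  | succ i ih => rw [pow_succ, Module.End.mul_apply, ih, ← add_assoc]; rfl

theorem aeval_seqShift_X_sub_C_apply (a : 𝕜) (r : ℕ → 𝕜) (k : ℕ) :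
    aeval (seqShift 𝕜) (X - C a) r k = r (k + 1) - a * r k := by
  simp [seqShift, LinearMap.funLeft_apply]

theorem tendsto_of_tendsto_aeval_seqShift_prod_X_sub_C (s : Multiset 𝕜) (hs : ∀ a ∈ s, ‖a‖ < 1)
    {r : ℕ → 𝕜} {L : 𝕜}
    (h : Tendsto (aeval (seqShift 𝕜) (s.map fun a => X - C a).prod r) atTop (𝓝 L)) :
    Tendsto r atTop (𝓝 (L / ((s.map fun a => X - C a).prod).eval 1)) := by
  induction s using Multiset.induction_on generalizing r L with
  | empty => simpa using h
  | cons a s ih =>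
    set P := (s.map fun a => X - C a).prod
    have hfactor : aeval (seqShift 𝕜) ((X - C a) * P) r =
        aeval (seqShift 𝕜) P (aeval (seqShift 𝕜) (X - C a) r) := by
      rw [mul_comm, map_mul, Module.End.mul_apply]
    rw [Multiset.map_cons, Multiset.prod_cons, hfactor] at h
    rw [Multiset.map_cons, Multiset.prod_cons]
    have hdiff := ih (fun b hb => hs b (Multiset.mem_cons_of_mem hb)) h
    simp only [funext (aeval_seqShift_X_sub_C_apply a r)] at hdiff
    rw [eval_mul, mul_comm, ← div_div]
    simpa using
      tendsto_div_one_sub_of_tendsto_succ_sub_mul (hs a (Multiset.mem_cons_self a s)) hdiff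

theorem tendsto_of_tendsto_aeval_seqShift [IsAlgClosed 𝕜] {q : 𝕜[X]}
    (hq : ∀ z, q.IsRoot z → ‖z‖ < 1) {r : ℕ → 𝕜} {L : 𝕜}
    (h : Tendsto (aeval (seqShift 𝕜) q r) atTop (𝓝 L)) :
    Tendsto r atTop (𝓝 (L / q.eval 1)) := by
  have hq₀ : q ≠ 0 := fun h0 => by simpa using hq 1 (by simp [h0])
  have hsplit :=
    C_leadingCoeff_mul_prod_multiset_X_sub_C (IsAlgClosed.card_roots_eq_natDegree (p := q))
  set P := (q.roots.map fun a => X - C a).prod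
  have hc : q.leadingCoeff ≠ 0 := leadingCoeff_ne_zero.2 hq₀
  rw [← hsplit, map_mul, aeval_C, Module.End.mul_apply] at h
  have hP : Tendsto (aeval (seqShift 𝕜) P r) atTop (𝓝 (L / q.leadingCoeff)) := by
    simpa [hc, div_eq_inv_mul] using h.const_mul q.leadingCoeff⁻¹
  have := tendsto_of_tendsto_aeval_seqShift_prod_X_sub_C q.roots
    (fun a ha => hq a (isRoot_of_mem_roots ha)) hP
  rwa [← hsplit, eval_mul, eval_C, ← div_div]

end NormedField

/-- **Lemma (discrete-time).** If all complex roots of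
`s^(m-1) + b_{m-1} s^(m-2) + ⋯ + b₂ s + b₁` are in the open unit disc, `f[k] → f*`, and
`r[k+m-1] + b_{m-1} r[k+m-2] + ⋯ + b₁ r[k] = f[k]` for all `k`, then
`r[k] → f*/(1 + b₁ + ⋯ + b_{m-1})`. -/
theorem high_order_difference_convergence
    (m : ℕ) (hm : 2 ≤ m) (b : ℕ → ℝ)
    (hroots : ∀ z : ℂ,
      z ^ (m - 1) + ∑ i ∈ Finset.range (m - 1), (b (i + 1) : ℂ) * z ^ i = 0 →
        ‖z‖ < 1)
    (f : ℕ → ℝ) (fstar : ℝ) (hflim : Tendsto f atTop (nhds fstar))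
    (r : ℕ → ℝ)
    (hrec : ∀ k : ℕ,
      r (k + m - 1) + ∑ i ∈ Finset.range (m - 1), b (i + 1) * r (k + i) = f k) :
    Tendsto r atTop (nhds (fstar / (1 + ∑ i ∈ Finset.range (m - 1), b (i + 1)))) := by
  set q : ℂ[X] := X ^ (m - 1) + ∑ i ∈ Finset.range (m - 1), C (b (i + 1) : ℂ) * X ^ i
  have hq_eval (z : ℂ) :
      q.eval z = z ^ (m - 1) + ∑ i ∈ Finset.range (m - 1), (b (i + 1) : ℂ) * z ^ i := by
    simp [q, eval_finsetSum]
  have hq_aeval : aeval (seqShift ℂ) q (fun k => r k) = fun k => (f k : ℂ) := by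
    ext k
    rw [← hrec k, show k + m - 1 = k + (m - 1) by omega]
    simp [q, map_sum, seqShift_pow_apply]
  have hlim := tendsto_of_tendsto_aeval_seqShift (fun z hz => hroots z (by rwa [← hq_eval]))
    (by rw [hq_aeval]; exact tendsto_ofReal_iff.2 hflim)
  rw [hq_eval] at hlim
  rw [← tendsto_ofReal_iff]
  simpa using hlim
end

section
/- Let m ≥ 2 and let b₁,…,b_{m−1} be real numbers. Let A be the m×m real matrix with A_{i,i+1} = 1 for i = 1,…,m−1 and all other entries zero, let B = (0,…,0,1)ᵀ ∈ ℝ^m, let K₄ = (b₁, b₂−b₁, …, b_{m−1}−b_{m−2}, 1−b_{m−1}) and K₅ = (b₁,…,b_{m−1},1) be 1×m row vectors. Then for every N ≥ 1 and every N×N real matrix S, one has (I_N ⊗ K₅) · (I_N ⊗ (A + BK₄) − S ⊗ (BK₅)) = (I_N − S) ⊗ K₅, an equality of N×(Nm) real matrices. -/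
open Kronecker

/-- Equation (23) of the paper: with `A` the `m×m` shift matrix, `B = (0,…,0,1)ᵀ`,
`K₄ = (b₁, b₂−b₁, …, b_{m−1}−b_{m−2}, 1−b_{m−1})` and `K₅ = (b₁,…,b_{m−1},1)`, for every
`N×N` matrix `S`, `(I_N ⊗ K₅)(I_N ⊗ (A + B K₄) − S ⊗ (B K₅)) = (I_N − S) ⊗ K₅`. -/
theorem kron_K5_closed_loop
    (m : ℕ) (hm : 2 ≤ m) (b : ℕ → ℝ)
    (A : Matrix (Fin m) (Fin m) ℝ)
    (hA : A = Matrix.of fun i j : Fin m => if (i : ℕ) + 1 = (j : ℕ) then (1:ℝ) else 0)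
    (B : Matrix (Fin m) (Fin 1) ℝ)
    (hB : B = Matrix.of fun (i : Fin m) (_ : Fin 1) => if (i : ℕ) = m - 1 then (1:ℝ) else 0)
    (K₄ : Matrix (Fin 1) (Fin m) ℝ)
    (hK₄ : K₄ = Matrix.of fun (_ : Fin 1) (j : Fin m) =>
      (if (j : ℕ) = m - 1 then (1:ℝ) else b ((j : ℕ) + 1)) -
        (if (j : ℕ) = 0 then (0:ℝ) else b (j : ℕ)))
    (K₅ : Matrix (Fin 1) (Fin m) ℝ)
    (hK₅ : K₅ = Matrix.of fun (_ : Fin 1) (j : Fin m) =>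
      if (j : ℕ) = m - 1 then (1:ℝ) else b ((j : ℕ) + 1))
    (N : ℕ) (hN : 1 ≤ N) (S : Matrix (Fin N) (Fin N) ℝ) :
    ((1 : Matrix (Fin N) (Fin N) ℝ) ⊗ₖ K₅) *
        ((1 : Matrix (Fin N) (Fin N) ℝ) ⊗ₖ (A + B * K₄) - S ⊗ₖ (B * K₅)) =
      ((1 : Matrix (Fin N) (Fin N) ℝ) - S) ⊗ₖ K₅ := by
  have hKB : K₅ * B = 1 := by
    ext i j
    fin_cases i; fin_cases j
    simp only [Matrix.mul_apply, hK₅, hB, Matrix.of_apply]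
    rw [Finset.sum_eq_single (⟨m - 1, by omega⟩ : Fin m)]
    · simp
    · intro k _ hk
      have : (k : ℕ) ≠ m - 1 := by
        intro h; apply hk; apply Fin.ext; simpa using h
      simp [this]
    · simp
  have h1 : K₅ * (A + B * K₄) = K₅ := by
    rw [Matrix.mul_add, ← Matrix.mul_assoc, hKB, Matrix.one_mul]
    ext i j
    fin_cases i
    simp only [Matrix.add_apply, Matrix.mul_apply, hK₅, hK₄, hA, Matrix.of_apply]
    rcases Nat.eq_zero_or_pos (j : ℕ) with hj | hj
    · rw [Finset.sum_eq_zero]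
      · simp [hj, show (0 : ℕ) ≠ m - 1 by omega]
      · intro k _
        simp [show (k : ℕ) + 1 ≠ (j : ℕ) by omega]
    · have hjm : (j : ℕ) < m := j.isLt
      rw [Finset.sum_eq_single (⟨(j : ℕ) - 1, by omega⟩ : Fin m)]
      · have h1 : ((j : ℕ) - 1) ≠ m - 1 := by omega
        have h2 : (j : ℕ) - 1 + 1 = (j : ℕ) := by omega
        simp only [h1, if_false, h2, if_pos rfl, mul_one,
          show (j : ℕ) ≠ 0 by omega, if_false, if_true]
        ring_nf
      · intro k _ hk
        have : (k : ℕ) + 1 ≠ (j : ℕ) := by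
          intro h; apply hk; apply Fin.ext; simp; omega
        simp [this]
      · simp
  have h2 : K₅ * (B * K₅) = K₅ := by
    rw [← Matrix.mul_assoc, hKB, Matrix.one_mul]
  rw [Matrix.mul_sub, ← Matrix.mul_kronecker_mul, ← Matrix.mul_kronecker_mul,
    Matrix.one_mul, Matrix.one_mul, h1, h2]
  ext ⟨i, i'⟩ ⟨j, j'⟩
  simp [Matrix.kroneckerMap_apply, Matrix.sub_apply, sub_mul]
end

section
/- Let N ≥ 1, let α : ℝ → (Fin N → Fin N → ℝ) be such that α(t) i j ≥ 0 for all t, i, j, and let x : ℝ → (Fin N → ℝ) be such that for each index i the function t ↦ x(t) i is differentiable with derivative at every t equal to ∑_{j} α(t) i j · (x(t) j − x(t) i). Then the function t ↦ max_i x(t) i is nonincreasing on [0, ∞) and the function t ↦ min_i x(t) i is nondecreasing on [0, ∞). -/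
open Filter

section consensus_aux

lemma consensus_attain_sup {N : ℕ} [Nonempty (Fin N)] (f : Fin N → ℝ) :
    ∃ i, (⨆ j, f j) = f i ∧ ∀ j, f j ≤ f i := by
  obtain ⟨i, hi⟩ := Finite.exists_max f
  exact ⟨i, le_antisymm (ciSup_le hi) (le_ciSup (Set.finite_range f).bddAbove i), hi⟩

lemma consensus_inf_eq_neg_sup_neg {N : ℕ} [Nonempty (Fin N)] (f : Fin N → ℝ) :
    (⨅ i, f i) = -⨆ i, -f i := by
  obtain ⟨i, hi⟩ := Finite.exists_min f
  have h1 : (⨅ j, f j) = f i :=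
    le_antisymm (ciInf_le (Set.finite_range f).bddBelow i) (le_ciInf hi)
  have h2 : (⨆ j, -f j) = -f i :=
    le_antisymm (ciSup_le fun j => neg_le_neg (hi j))
      (le_ciSup (Set.finite_range fun j => -f j).bddAbove i)
  rw [h1, h2, neg_neg]

lemma consensus_max_antitone
    (N : ℕ) (hN : 1 ≤ N)
    (α : ℝ → Fin N → Fin N → ℝ) (hα : ∀ t i j, 0 ≤ α t i j)
    (x : ℝ → Fin N → ℝ)
    (hx : ∀ i : Fin N, ∀ t : ℝ,
      HasDerivAt (fun τ => x τ i) (∑ j, α t i j * (x t j - x t i)) t) :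
    AntitoneOn (fun t => ⨆ i, x t i) (Set.Ici (0:ℝ)) := by
  haveI : Nonempty (Fin N) := ⟨⟨0, hN⟩⟩
  set f : ℝ → ℝ := fun t => ⨆ i, x t i with hfdef
  have hxc : ∀ i, Continuous fun τ => x τ i := fun i =>
    continuous_iff_continuousAt.2 fun t => (hx i t).continuousAt
  have hfc : Continuous f := by
    have heq : f = fun t => Finset.univ.sup' Finset.univ_nonempty (fun i => x t i) := by
      funext t
      rw [Finset.sup'_eq_csSup_image, Finset.coe_univ, Set.image_univ]
      rfl
    rw [heq]
    exact Continuous.finset_sup'_apply _ fun i _ => hxc i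
  -- Dini derivative estimate for the maximum
  have key : ∀ t : ℝ, ∀ r : ℝ, 0 < r → ∀ᶠ z in nhdsWithin t (Set.Ioi t), slope f t z < r := by
    intro t r hr
    obtain ⟨i₀, hi₀, hmax⟩ := consensus_attain_sup (x t)
    have hft : f t = x t i₀ := hi₀
    have hev : ∀ j : Fin N, ∀ᶠ z in nhdsWithin t (Set.Ioi t),
        (x t j = f t → slope (fun τ => x τ j) t z < r) ∧
        (x t j < f t → x z j < x z i₀) := by
      intro j
      by_cases hj : x t j = f t
      · -- the derivative of x · j at t is nonpositive
        have hd : (∑ k, α t j k * (x t k - x t j)) ≤ 0 := by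
          apply Finset.sum_nonpos
          intro k _
          apply mul_nonpos_of_nonneg_of_nonpos (hα t j k)
          have : x t k ≤ x t j := by rw [hj, hft]; exact hmax k
          linarith
        have hslope : Filter.Tendsto (slope (fun τ => x τ j) t)
            (nhdsWithin t {t}ᶜ) (nhds (∑ k, α t j k * (x t k - x t j))) :=
          hasDerivAt_iff_tendsto_slope.1 (hx j t)
        have hslope' : Filter.Tendsto (slope (fun τ => x τ j) t)
            (nhdsWithin t (Set.Ioi t)) (nhds (∑ k, α t j k * (x t k - x t j))) :=
          hslope.mono_left (nhdsWithin_mono t fun z hz => ne_of_gt hz)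
        have hevs : ∀ᶠ z in nhdsWithin t (Set.Ioi t), slope (fun τ => x τ j) t z < r :=
          hslope' (Iio_mem_nhds (lt_of_le_of_lt hd hr))
        filter_upwards [hevs] with z hz
        exact ⟨fun _ => hz, fun hlt => absurd hj (ne_of_lt hlt)⟩
      · have hjlt : x t j < x t i₀ := by
          rw [hft] at hj
          exact lt_of_le_of_ne (hmax j) hj
        have hevs : ∀ᶠ z in nhds t, x z j < x z i₀ :=
          (hxc j).continuousAt.eventually_lt (hxc i₀).continuousAt hjlt
        filter_upwards [hevs.filter_mono nhdsWithin_le_nhds] with z hz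
        refine ⟨fun h => absurd h hj, fun _ => hz⟩
    have hall : ∀ᶠ z in nhdsWithin t (Set.Ioi t),
        ∀ j : Fin N, (x t j = f t → slope (fun τ => x τ j) t z < r) ∧
          (x t j < f t → x z j < x z i₀) := eventually_all.2 hev
    filter_upwards [hall, self_mem_nhdsWithin] with z hz hzt
    obtain ⟨iz, hiz, hmaxz⟩ := consensus_attain_sup (x z)
    have hle : x t iz ≤ f t := le_ciSup (Set.finite_range (x t)).bddAbove iz
    rcases eq_or_lt_of_le hle with heq | hlt
    · have hss : slope f t z = slope (fun τ => x τ iz) t z := by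
        rw [slope_def_field, slope_def_field]
        have hfz : f z = x z iz := hiz
        show (f z - f t) / (z - t) = _
        rw [hfz, ← heq]
      rw [hss]
      exact (hz iz).1 heq
    · exact absurd (hmaxz i₀) (not_le.2 ((hz iz).2 hlt))
  intro a ha b hb hab
  have := image_le_of_liminf_slope_right_le_deriv_boundary (f := f) (a := a) (b := b)
    hfc.continuousOn (B := fun _ => f a) (B' := fun _ => 0) le_rfl continuousOn_const
    (fun t _ => (hasDerivWithinAt_const t _ (f a)))
    (fun t _ r hr => ((key t r hr).frequently))
    (Set.right_mem_Icc.2 hab)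
  exact this

end consensus_aux

/-- For the first-order consensus dynamics
`ẋᵢ = ∑ⱼ αᵢⱼ(t)(xⱼ − xᵢ)` with nonnegative weights, the pointwise maximum of the states is
nonincreasing and the pointwise minimum is nondecreasing on `[0,∞)`. -/
theorem consensus_max_min_monotone
    (N : ℕ) (hN : 1 ≤ N)
    (α : ℝ → Fin N → Fin N → ℝ) (hα : ∀ t i j, 0 ≤ α t i j)
    (x : ℝ → Fin N → ℝ)
    (hx : ∀ i : Fin N, ∀ t : ℝ,
      HasDerivAt (fun τ => x τ i) (∑ j, α t i j * (x t j - x t i)) t) :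
    AntitoneOn (fun t => ⨆ i, x t i) (Set.Ici (0:ℝ)) ∧
      MonotoneOn (fun t => ⨅ i, x t i) (Set.Ici (0:ℝ)) := by
  haveI : Nonempty (Fin N) := ⟨⟨0, hN⟩⟩
  refine ⟨consensus_max_antitone N hN α hα x hx, ?_⟩
  set y : ℝ → Fin N → ℝ := fun τ i => -(x τ i) with hy
  have hyd : ∀ i : Fin N, ∀ t : ℝ,
      HasDerivAt (fun τ => y τ i) (∑ j, α t i j * (y t j - y t i)) t := by
    intro i t
    have h := (hx i t).neg
    have h2 : (∑ j, α t i j * (y t j - y t i)) = -∑ j, α t i j * (x t j - x t i) := by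
      rw [← Finset.sum_neg_distrib]
      apply Finset.sum_congr rfl
      intro j _
      simp only [hy]
      ring
    rw [h2]
    exact h
  have hmono := consensus_max_antitone N hN α hα y hyd
  intro a ha b hb hab
  have h := hmono ha hb hab
  have ha' : (⨅ i, x a i) = -⨆ i, y a i := consensus_inf_eq_neg_sup_neg (x a)
  have hb' : (⨅ i, x b i) = -⨆ i, y b i := consensus_inf_eq_neg_sup_neg (x b)
  simp only [ha', hb']
  linarith
end

section
/- Let N ≥ 1, let α : ℝ → (Fin N → Fin N → ℝ) satisfy α(t) i j ≥ 0 for all t, i, j, and the balance condition ∑_{j} α(t) i j = ∑_{j} α(t) j i for every t and every i. Let x : ℝ → (Fin N → ℝ) be such that for each index i the function t ↦ x(t) i is differentiable with derivative at every t equal to ∑_{j} α(t) i j · (x(t) j − x(t) i). Then ∑_i x(t) i = ∑_i x(0) i for all t ≥ 0; consequently, if there exists x* ∈ ℝ with lim_{t→∞} x(t) i = x* for every index i, then x* = (1/N) ∑_i x(0) i. -/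
/-! Balance makes the total inflow of the network equal its total outflow, so the state sum
`∑ᵢ xᵢ` has zero derivative and is constant. A common limit `x*` of all states then forces
`N x* = ∑ᵢ xᵢ(0)`. -/

open Filter Finset

lemma sum_sum_mul_sub_eq_zero_of_balanced {ι R : Type*} [Fintype ι] [CommRing R]
    (a : ι → ι → R) (hbal : ∀ i, ∑ j, a i j = ∑ j, a j i) (y : ι → R) :
    ∑ i, ∑ j, a i j * (y j - y i) = 0 := by
  simp only [mul_sub, sum_sub_distrib, ← sum_mul]
  rw [sum_comm, sub_eq_zero]
  refine sum_congr rfl fun i _ => ?_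
  rw [← sum_mul, hbal]

lemma sum_const_of_balanced_consensus {ι : Type*} [Fintype ι]
    (α : ℝ → ι → ι → ℝ) (hbal : ∀ t i, ∑ j, α t i j = ∑ j, α t j i) (x : ℝ → ι → ℝ)
    (hx : ∀ i t, HasDerivAt (fun τ => x τ i) (∑ j, α t i j * (x t j - x t i)) t) (t s : ℝ) :
    ∑ i, x t i = ∑ i, x s i := by
  have hderiv : ∀ t, HasDerivAt (fun τ => ∑ i, x τ i) 0 t := fun t => by
    simpa only [sum_sum_mul_sub_eq_zero_of_balanced (α t) (hbal t) (x t)] using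
      HasDerivAt.fun_sum fun i (_ : i ∈ univ) => hx i t
  exact is_const_of_deriv_eq_zero (fun t => (hderiv t).differentiableAt)
    (fun t => (hderiv t).deriv) t s

lemma eq_sum_div_card_of_tendsto_of_sum_eq {ι : Type*} [Fintype ι] [Nonempty ι]
    {x : ℝ → ι → ℝ} {c xstar : ℝ} (hsum : ∀ t, ∑ i, x t i = c)
    (hlim : ∀ i, Tendsto (fun t => x t i) atTop (nhds xstar)) :
    xstar = c / Fintype.card ι := by
  have hlim_sum : Tendsto (fun t => ∑ i, x t i) atTop (nhds (Fintype.card ι * xstar)) := by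
    simpa [sum_const, nsmul_eq_mul] using tendsto_finsetSum univ fun i _ => hlim i
  have hc : Fintype.card ι * xstar = c :=
    tendsto_nhds_unique hlim_sum (by simpa only [hsum] using tendsto_const_nhds)
  rw [← hc, mul_div_cancel_left₀ _ (Nat.cast_ne_zero.mpr Fintype.card_ne_zero)]

theorem balanced_consensus_average_general
    (N : ℕ) (hN : 1 ≤ N)
    (α : ℝ → Fin N → Fin N → ℝ)
    (hbal : ∀ t : ℝ, ∀ i : Fin N, ∑ j, α t i j = ∑ j, α t j i)
    (x : ℝ → Fin N → ℝ)
    (hx : ∀ i : Fin N, ∀ t : ℝ,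
      HasDerivAt (fun τ => x τ i) (∑ j, α t i j * (x t j - x t i)) t) :
    (∀ t : ℝ, 0 ≤ t → ∑ i, x t i = ∑ i, x 0 i) ∧
      ∀ xstar : ℝ, (∀ i : Fin N, Tendsto (fun t => x t i) atTop (nhds xstar)) →
        xstar = (∑ i, x 0 i) / N := by
  have hconst := sum_const_of_balanced_consensus α hbal x hx
  refine ⟨fun t _ => hconst t 0, fun xstar hlim => ?_⟩
  have : Nonempty (Fin N) := ⟨⟨0, hN⟩⟩
  simpa using eq_sum_div_card_of_tendsto_of_sum_eq (fun t => hconst t 0) hlim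

/-- For balanced weights (`∑ⱼ αᵢⱼ(t) = ∑ⱼ αⱼᵢ(t)`) the state sum of the first-order consensus
dynamics is conserved; hence if all states converge to a common value `x*`, then
`x* = (1/N) ∑ᵢ xᵢ(0)`. -/
theorem balanced_consensus_average
    (N : ℕ) (hN : 1 ≤ N)
    (α : ℝ → Fin N → Fin N → ℝ) (hα : ∀ t i j, 0 ≤ α t i j)
    (hbal : ∀ t : ℝ, ∀ i : Fin N, ∑ j, α t i j = ∑ j, α t j i)
    (x : ℝ → Fin N → ℝ)
    (hx : ∀ i : Fin N, ∀ t : ℝ,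
      HasDerivAt (fun τ => x τ i) (∑ j, α t i j * (x t j - x t i)) t) :
    (∀ t : ℝ, 0 ≤ t → ∑ i, x t i = ∑ i, x 0 i) ∧
      ∀ xstar : ℝ, (∀ i : Fin N, Tendsto (fun t => x t i) atTop (nhds xstar)) →
        xstar = (∑ i, x 0 i) / N :=
  balanced_consensus_average_general N hN α hbal x hx
end

section
/- Let m ≥ 1, let A be an m×m real matrix, B ∈ ℝ^m a column vector, C a 1×m real row vector, and K ∈ ℝ^m a column vector. Let u : ℝ → ℝ be continuous, and let x, s : ℝ → ℝ^m be differentiable functions satisfying x′(t) = A x(t) + B u(t) and s′(t) = (A + KC) s(t) + B u(t) − K C x(t) for all t ≥ 0. Then x(t) − s(t) = exp((A + KC)t) (x(0) − s(0)) for all t ≥ 0. Moreover, if every complex eigenvalue of A + KC has negative real part, then lim_{t→∞} (x(t) − s(t)) = 0. -/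
/-!
The error `e = x - s` solves the autonomous linear equation `e' = (A + KC) e`, so by uniqueness
of solutions of Lipschitz ODEs it is `t ↦ exp (t (A + KC)) e 0`. For the decay, complexify and
decompose `e 0` along the generalized eigenspaces of `A + KC`: on the one for `μ`, `exp (t M)`
acts as `e^{tμ}` times a polynomial in `t`, which tends to `0` when `Re μ < 0`.
-/

open Filter Matrix NormedSpace Topology
open scoped Nat

section

variable {n : Type*} [Fintype n] [DecidableEq n]

attribute [local instance] Matrix.linftyOpNormedRing Matrix.linftyOpNormedAlgebra

section RCLike

variable {𝕂 : Type*} [RCLike 𝕂]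

theorem hasDerivAt_exp_smul_mulVec (M : Matrix n n 𝕂) (c : n → 𝕂) (t : 𝕂) :
    HasDerivAt (fun t : 𝕂 => exp (t • M) *ᵥ c) (M *ᵥ (exp (t • M) *ᵥ c)) t := by
  rw [mulVec_mulVec]
  exact (LinearMap.toContinuousLinearMap ((mulVecBilin 𝕂 𝕂).flip c)).hasFDerivAt.comp_hasDerivAt t
    (hasDerivAt_exp_smul_const' M t)

theorem exp_mulVec_eq_sum_of_pow_mulVec_eq_zero {N : Matrix n n 𝕂} {v : n → 𝕂} {k : ℕ}
    (hk : N ^ k *ᵥ v = 0) :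
    exp N *ᵥ v = ∑ i ∈ Finset.range k, (i !⁻¹ : 𝕂) • (N ^ i *ᵥ v) := by
  have hsum : HasSum (fun i => (i !⁻¹ : 𝕂) • (N ^ i *ᵥ v)) (exp N *ᵥ v) := by
    have := (exp_series_hasSum_exp' (𝕂 := 𝕂) N).map ((mulVecBilin 𝕂 𝕂).flip v)
      (continuous_id.matrix_mulVec continuous_const)
    simp only [Function.comp_def, LinearMap.flip_apply, mulVecBilin_apply, smul_mulVec] at this
    exact this
  refine hsum.unique (hasSum_sum_of_ne_finset_zero fun i hi => ?_)
  obtain ⟨j, rfl⟩ := Nat.exists_eq_add_of_le' (not_lt.mp (Finset.mem_range.not.mp hi))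
  rw [pow_add, ← mulVec_mulVec, hk, mulVec_zero, smul_zero]

theorem exp_smul_mulVec_eq_sum_of_pow_sub_smul_one_mulVec_eq_zero {M : Matrix n n 𝕂} {μ : 𝕂}
    {v : n → 𝕂} {k : ℕ} (hk : (M - μ • 1) ^ k *ᵥ v = 0) (t : 𝕂) :
    exp (t • M) *ᵥ v =
      ∑ i ∈ Finset.range k, (exp (t * μ) * t ^ i * (i !⁻¹ : 𝕂)) • ((M - μ • 1) ^ i *ᵥ v) := by
  have hsplit : t • M = algebraMap 𝕂 _ (t * μ) + t • (M - μ • 1) := by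
    rw [Algebra.algebraMap_eq_smul_one, smul_sub, mul_smul]
    abel
  have htk : (t • (M - μ • 1)) ^ k *ᵥ v = 0 := by rw [smul_pow, smul_mulVec, hk, smul_zero]
  have hscalar : exp (algebraMap 𝕂 (Matrix n n 𝕂) (t * μ)) = algebraMap 𝕂 _ (exp (t * μ)) :=
    (algebraMap_exp_comm _).symm
  rw [hsplit, Matrix.exp_add_of_commute _ _ (Algebra.commute_algebraMap_left _ _), hscalar,
    ← Algebra.smul_def, smul_mulVec, exp_mulVec_eq_sum_of_pow_mulVec_eq_zero htk, Finset.smul_sum]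
  refine Finset.sum_congr rfl fun i _ => ?_
  rw [smul_pow, smul_mulVec, smul_smul, smul_smul]
  ring_nf

end RCLike

theorem eq_exp_smul_mulVec_of_hasDerivAt {M : Matrix n n ℝ} {e : ℝ → n → ℝ}
    (he : ∀ t, 0 ≤ t → HasDerivAt e (M *ᵥ e t) t) {t : ℝ} (ht : 0 ≤ t) :
    e t = exp (t • M) *ᵥ e 0 := by
  have hsol := hasDerivAt_exp_smul_mulVec M (e 0)
  refine ODE_solution_unique (v := fun _ => M.mulVecLin.toContinuousLinearMap)
    (fun _ => ContinuousLinearMap.lipschitz _)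
    (fun s hs => (he s hs.1).continuousAt.continuousWithinAt)
    (fun s hs => (he s hs.1).hasDerivWithinAt)
    (fun s _ => (hsol s).continuousAt.continuousWithinAt)
    (fun s _ => (hsol s).hasDerivWithinAt) (by simp) ⟨ht, le_rfl⟩

theorem Module.End.mem_spectrum_of_mem_maxGenEigenspace {R M : Type*} [CommRing R]
    [AddCommGroup M] [Module R M] {f : Module.End R M} {μ : R} {x : M}
    (hx : x ∈ f.maxGenEigenspace μ) (hx0 : x ≠ 0) : μ ∈ spectrum R f := by
  have hμ : f.HasUnifEigenvalue μ ⊤ := fun h => hx0 (by simpa [h] using hx)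
  exact ((hasUnifEigenvalue_iff_hasUnifEigenvalue_one (by simp)).mp hμ).mem_spectrum

theorem tendsto_cexp_mul_mul_pow_atTop_nhds_zero {μ : ℂ} (hμ : μ.re < 0) (i : ℕ) :
    Tendsto (fun t : ℝ => Complex.exp (t * μ) * t ^ i) atTop (𝓝 0) := by
  rw [tendsto_zero_iff_norm_tendsto_zero]
  refine (tendsto_rpow_mul_exp_neg_mul_atTop_nhds_zero i (-μ.re) (neg_pos.mpr hμ)).congr' ?_
  filter_upwards [eventually_ge_atTop 0] with t ht
  simp [Complex.norm_exp, abs_of_nonneg ht, mul_comm]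

theorem tendsto_exp_smul_mulVec_atTop_nhds_zero_of_pow_sub_smul_one_mulVec_eq_zero
    {M : Matrix n n ℂ} {μ : ℂ} (hμ : μ.re < 0) {w : n → ℂ} {k : ℕ}
    (hk : (M - μ • 1) ^ k *ᵥ w = 0) :
    Tendsto (fun t : ℝ => exp ((t : ℂ) • M) *ᵥ w) atTop (𝓝 0) := by
  have hterm (i : ℕ) : Tendsto (fun t : ℝ => (exp ((t : ℂ) * μ) * (t : ℂ) ^ i * (i !⁻¹ : ℂ)) •
      ((M - μ • 1) ^ i *ᵥ w)) atTop (𝓝 0) := by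
    simpa [← Complex.exp_eq_exp_ℂ] using
      ((tendsto_cexp_mul_mul_pow_atTop_nhds_zero hμ i).mul_const (i !⁻¹ : ℂ)).smul_const
        ((M - μ • 1) ^ i *ᵥ w)
  have hsum := tendsto_finsetSum (Finset.range k) fun i _ => hterm i
  rw [Finset.sum_const_zero] at hsum
  exact hsum.congr fun t => (exp_smul_mulVec_eq_sum_of_pow_sub_smul_one_mulVec_eq_zero hk t).symm

theorem tendsto_exp_complex_smul_mulVec_atTop_nhds_zero {M : Matrix n n ℂ}
    (hM : ∀ μ ∈ spectrum ℂ M, μ.re < 0) (v : n → ℂ) :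
    Tendsto (fun t : ℝ => exp ((t : ℂ) • M) *ᵥ v) atTop (𝓝 0) := by
  have hv : v ∈ ⨆ μ, Module.End.maxGenEigenspace (toLinAlgEquiv' M) μ := by
    rw [Module.End.iSup_maxGenEigenspace_eq_top]; trivial
  induction hv using Submodule.iSup_induction' with
  | mem μ w hw =>
    rcases eq_or_ne w 0 with rfl | hw0
    · simp
    have hμ : μ.re < 0 :=
      hM μ (AlgEquiv.spectrum_eq toLinAlgEquiv' M ▸
        Module.End.mem_spectrum_of_mem_maxGenEigenspace hw hw0)
    obtain ⟨k, hk⟩ := (Module.End.mem_maxGenEigenspace _ _ _).mp hw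
    rw [← map_one toLinAlgEquiv', ← map_smul, ← map_sub, ← map_pow, toLinAlgEquiv'_apply] at hk
    exact tendsto_exp_smul_mulVec_atTop_nhds_zero_of_pow_sub_smul_one_mulVec_eq_zero hμ hk
  | zero => simp
  | add w₁ w₂ _ _ h₁ h₂ => simpa [mulVec_add] using h₁.add h₂

theorem exp_map_algebraMap_real_complex (A : Matrix n n ℝ) :
    exp (A.map (algebraMap ℝ ℂ)) = (exp A).map (algebraMap ℝ ℂ) :=
  (map_exp (algebraMap ℝ ℂ).mapMatrix
    (continuous_id.matrix_map (continuous_algebraMap ℝ ℂ)) A).symm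

theorem tendsto_exp_smul_mulVec_atTop_nhds_zero {M : Matrix n n ℝ}
    (hM : ∀ μ ∈ spectrum ℂ (M.map (algebraMap ℝ ℂ)), μ.re < 0) (c : n → ℝ) :
    Tendsto (fun t : ℝ => exp (t • M) *ᵥ c) atTop (𝓝 0) := by
  have hre : Continuous fun v : n → ℂ => fun i => (v i).re := by fun_prop
  have hcomplex := tendsto_exp_complex_smul_mulVec_atTop_nhds_zero hM (algebraMap ℝ ℂ ∘ c)
  have hreal (t : ℝ) :
      (fun i => (exp ((t : ℂ) • M.map (algebraMap ℝ ℂ)) *ᵥ (algebraMap ℝ ℂ ∘ c)) i |>.re) =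
        exp (t • M) *ᵥ c := by
    have hsmul : (t : ℂ) • M.map (algebraMap ℝ ℂ) = (t • M).map (algebraMap ℝ ℂ) := by
      ext i j
      simp
    ext i
    rw [hsmul, exp_map_algebraMap_real_complex, ← RingHom.map_mulVec]
    simp
  simpa [← Pi.zero_def] using ((hre.tendsto 0).comp hcomplex).congr hreal

end

theorem observer_error_dynamics_general
    (m : ℕ)
    (A : Matrix (Fin m) (Fin m) ℝ) (B C K : Fin m → ℝ)
    (u : ℝ → ℝ)
    (x s : ℝ → Fin m → ℝ)
    (hx : ∀ t : ℝ, 0 ≤ t → HasDerivAt x (A.mulVec (x t) + u t • B) t)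
    (hs : ∀ t : ℝ, 0 ≤ t → HasDerivAt s
      ((A + Matrix.vecMulVec K C).mulVec (s t) + u t • B - (C ⬝ᵥ x t) • K) t) :
    (∀ t : ℝ, 0 ≤ t →
      x t - s t = (NormedSpace.exp (t • (A + Matrix.vecMulVec K C))).mulVec (x 0 - s 0)) ∧
    ((∀ μ : ℂ, μ ∈ spectrum ℂ ((A + Matrix.vecMulVec K C).map (algebraMap ℝ ℂ)) → μ.re < 0) →
      Tendsto (fun t => x t - s t) atTop (nhds 0)) := by
  have herr (t : ℝ) (ht : 0 ≤ t) : HasDerivAt (fun t => x t - s t)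
      ((A + vecMulVec K C) *ᵥ (x t - s t)) t := by
    refine ((hx t ht).sub (hs t ht)).congr_deriv ?_
    simp only [add_mulVec, mulVec_sub, vecMulVec_mulVec, op_smul_eq_smul]
    abel
  have hsol (t : ℝ) (ht : 0 ≤ t) := eq_exp_smul_mulVec_of_hasDerivAt herr ht
  refine ⟨hsol, fun hspec => ?_⟩
  refine (tendsto_exp_smul_mulVec_atTop_nhds_zero hspec (x 0 - s 0)).congr' ?_
  filter_upwards [eventually_ge_atTop 0] with t ht
  exact (hsol t ht).symm

/-- **Observer error dynamics.** If `x′ = Ax + Bu` and `s′ = (A+KC)s + Bu − K(Cx)` on `[0,∞)`,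
then `x(t) − s(t) = exp((A+KC)t)(x(0) − s(0))` for all `t ≥ 0`; moreover, if every complex
eigenvalue of `A + KC` has negative real part, then `x(t) − s(t) → 0` as `t → ∞`. -/
theorem observer_error_dynamics
    (m : ℕ) (hm : 1 ≤ m)
    (A : Matrix (Fin m) (Fin m) ℝ) (B C K : Fin m → ℝ)
    (u : ℝ → ℝ) (hu : Continuous u)
    (x s : ℝ → Fin m → ℝ)
    (hx : ∀ t : ℝ, 0 ≤ t → HasDerivAt x (A.mulVec (x t) + u t • B) t)
    (hs : ∀ t : ℝ, 0 ≤ t → HasDerivAt s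
      ((A + Matrix.vecMulVec K C).mulVec (s t) + u t • B - (C ⬝ᵥ x t) • K) t) :
    (∀ t : ℝ, 0 ≤ t →
      x t - s t = (NormedSpace.exp (t • (A + Matrix.vecMulVec K C))).mulVec (x 0 - s 0)) ∧
    ((∀ μ : ℂ, μ ∈ spectrum ℂ ((A + Matrix.vecMulVec K C).map (algebraMap ℝ ℂ)) → μ.re < 0) →
      Tendsto (fun t => x t - s t) atTop (nhds 0)) :=
  observer_error_dynamics_general m A B C K u x s hx hs
end

section
/- Let N ≥ 1 and let Φ : ℕ → ℕ → Matrix (Fin N) (Fin N) ℝ satisfy: (i) there exists M > 0 with ‖Φ(j,i)‖ ≤ M for all j ≥ i; (ii) for every i ∈ ℕ, the limit lim_{k→∞} Φ(k,i) exists. Let ω : ℕ → ℝ^N satisfy ∑_{i=0}^{∞} ‖ω[i]‖ < ∞, and let v ∈ ℝ^N. Then the sequence k ↦ Φ(k,0) v + ∑_{i=0}^{k−1} Φ(k,i) ω[i] converges in ℝ^N as k → ∞. -/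
open Filter Matrix Topology Finset

attribute [local instance] Matrix.frobeniusNormedAddCommGroup Matrix.frobeniusNormedSpace

/-- Tannery's theorem, with summable majorant `‖B‖ M ‖x i‖`. -/
theorem ContinuousLinearMap.tendsto_sum_range_of_bounded_of_summable
    {𝕜 E F G : Type*} [NontriviallyNormedField 𝕜]
    [SeminormedAddCommGroup E] [NormedSpace 𝕜 E] [SeminormedAddCommGroup F] [NormedSpace 𝕜 F]
    [NormedAddCommGroup G] [NormedSpace 𝕜 G] [CompleteSpace G]
    (B : E →L[𝕜] F →L[𝕜] G) {f : ℕ → ℕ → E} {g : ℕ → E} {x : ℕ → F} {M : ℝ}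
    (hf : ∀ i, Tendsto (fun k => f k i) atTop (𝓝 (g i)))
    (hM : ∀ k, ∀ i < k, ‖f k i‖ ≤ M) (hx : Summable fun i => ‖x i‖) :
    Tendsto (fun k => ∑ i ∈ range k, B (f k i) (x i)) atTop (𝓝 (∑' i, B (g i) (x i))) := by
  have hM₀ : 0 ≤ M := (norm_nonneg _).trans (hM 1 0 one_pos)
  simp_rw [fun k => sum_eq_tsum_indicator (fun i => B (f k i) (x i)) (range k)]
  refine tendsto_tsum_of_dominated_convergence (hx.mul_left (‖B‖ * M)) (fun i => ?_) ?_
  · have hB : Tendsto (fun k => B (f k i) (x i)) atTop (𝓝 (B (g i) (x i))) :=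
      ((B.flip (x i)).continuous.tendsto _).comp (hf i)
    refine hB.congr' ?_
    filter_upwards [eventually_gt_atTop i] with k hk
    rw [Set.indicator_of_mem (by simpa using hk)]
  · refine Eventually.of_forall fun k i => ?_
    by_cases hi : i < k
    · rw [Set.indicator_of_mem (by simpa using hi)]
      calc ‖B (f k i) (x i)‖ ≤ ‖B‖ * ‖f k i‖ * ‖x i‖ := B.le_opNorm₂ _ _
        _ ≤ ‖B‖ * M * ‖x i‖ := by gcongr; exact hM k i hi
    · rw [Set.indicator_of_notMem (by simpa using hi), norm_zero]
      positivity

theorem discrete_variation_of_constants_convergence_general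
    (N : ℕ)
    (Φ : ℕ → ℕ → Matrix (Fin N) (Fin N) ℝ)
    (hbdd : ∃ M : ℝ, 0 < M ∧ ∀ j i : ℕ, i ≤ j → ‖Φ j i‖ ≤ M)
    (hlim : ∀ i : ℕ, ∃ Λ : Matrix (Fin N) (Fin N) ℝ, Tendsto (fun k => Φ k i) atTop (nhds Λ))
    (ω : ℕ → Fin N → ℝ) (hω : Summable fun i => ‖ω i‖)
    (v : Fin N → ℝ) :
    ∃ w : Fin N → ℝ,
      Tendsto (fun k : ℕ => (Φ k 0).mulVec v + ∑ i ∈ Finset.range k, (Φ k i).mulVec (ω i))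
        atTop (nhds w) := by
  obtain ⟨M, -, hM⟩ := hbdd
  choose Λ hΛ using hlim
  let B : Matrix (Fin N) (Fin N) ℝ →L[ℝ] (Fin N → ℝ) →L[ℝ] Fin N → ℝ :=
    (mulVecBilin ℝ ℝ).toContinuousBilinearMap
  have hinit : Tendsto (fun k => (Φ k 0).mulVec v) atTop (𝓝 ((Λ 0).mulVec v)) :=
    ((B.flip v).continuous.tendsto _).comp (hΛ 0)
  exact ⟨_, hinit.add (B.tendsto_sum_range_of_bounded_of_summable hΛ
    (fun k i hi => hM k i hi.le) hω)⟩

/-- **Cauchy-type convergence of the variation-of-constants formula (discrete time).**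
If the transition matrices `Φ(j,i)` are uniformly bounded and convergent as `j → ∞` for each
fixed `i`, and `∑ᵢ ‖ω[i]‖ < ∞`, then `k ↦ Φ(k,0)v + ∑_{i=0}^{k−1} Φ(k,i)ω[i]` converges. -/
theorem discrete_variation_of_constants_convergence
    (N : ℕ) (hN : 1 ≤ N)
    (Φ : ℕ → ℕ → Matrix (Fin N) (Fin N) ℝ)
    (hbdd : ∃ M : ℝ, 0 < M ∧ ∀ j i : ℕ, i ≤ j → ‖Φ j i‖ ≤ M)
    (hlim : ∀ i : ℕ, ∃ Λ : Matrix (Fin N) (Fin N) ℝ, Tendsto (fun k => Φ k i) atTop (nhds Λ))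
    (ω : ℕ → Fin N → ℝ) (hω : Summable fun i => ‖ω i‖)
    (v : Fin N → ℝ) :
    ∃ w : Fin N → ℝ,
      Tendsto (fun k : ℕ => (Φ k 0).mulVec v + ∑ i ∈ Finset.range k, (Φ k i).mulVec (ω i))
        atTop (nhds w) :=
  discrete_variation_of_constants_convergence_general N Φ hbdd hlim ω hω v
end

section
/- Let m ≥ 2, let a₁,…,a_{m−1} be real numbers, and let p(s) = s^{m−1} + a_{m−1}s^{m−2} + ⋯ + a₂s + a₁. Suppose every complex root of p has negative real part. Let x₁,…,x_m : ℝ → ℝ be differentiable functions with x_j′(t) = x_{j+1}(t) for all t ≥ 0 and all j = 1,…,m−1, and suppose lim_{t→∞} (a₁x₁(t) + a₂x₂(t) + ⋯ + a_{m−1}x_{m−1}(t) + x_m(t)) = c for some c ∈ ℝ. Then lim_{t→∞} x₁(t) = c/a₁ and lim_{t→∞} x_j(t) = 0 for every j = 2,…,m. -/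
/-!
Factor `p(s) = ∏ₖ (s - zₖ)` over `ℂ` and read the chain as `x_{i+1} = Dⁱ x₁`, so that the
hypothesis says that `p(D) x₁` converges. If `(D - z) u` converges to `L` and `Re z < 0`, then
`u` converges to `L / (-z)` by variation of constants. Peeling off the factors one at a time shows
that `q(D) x₁` converges for every polynomial `q` of degree `< m`; in particular every `xⱼ`
converges. A convergent function with convergent derivative has derivative tending to `0`, so
`xⱼ → 0` for `j ≥ 2`, and then `a₁ x₁ → c`.
-/

open Filter Topology

theorem tendsto_zero_of_hasDerivAt_eq_mul_add {z : ℂ} (hz : z.re < 0) {v g : ℝ → ℂ}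
    (hv : ∀ᶠ t in atTop, HasDerivAt v (z * v t + g t) t) (hg : Tendsto g atTop (𝓝 0)) :
    Tendsto v atTop (𝓝 0) := by
  rw [NormedAddGroup.tendsto_nhds_zero]
  intro ε hε
  set β := -z.re
  have hβ : 0 < β := neg_pos.2 hz
  have hnorm_exp (s : ℝ) : ‖Complex.exp (-z * s)‖ = Real.exp (β * s) := by
    simp [Complex.norm_exp, β]
  obtain ⟨T, hT⟩ := (hv.and <| NormedAddGroup.tendsto_nhds_zero.1 hg (ε * β / 2)
    (by positivity)).exists_forall_of_atTop
  set w : ℝ → ℂ := fun s => Complex.exp (-z * s) * v s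
  have hw (s : ℝ) (hs : T ≤ s) : HasDerivAt w (Complex.exp (-z * s) * g s) s := by
    have hexp : HasDerivAt (fun s : ℝ => Complex.exp (-z * s)) (Complex.exp (-z * s) * -z) s :=
      by simpa using ((hasDerivAt_id (s : ℂ)).const_mul (-z)).cexp.comp_ofReal
    exact (hexp.fun_mul (hT s hs).1).congr_deriv (by ring)
  -- `w` grows at most like `ε/2 ⋅ exp (β t)`, which exactly cancels the factor `exp (-β t)`.
  have hw_le (t : ℝ) (ht : T ≤ t) : ‖w t‖ ≤ ‖w T‖ + ε / 2 * Real.exp (β * t) := by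
    refine image_norm_le_of_norm_deriv_right_le_deriv_boundary
      (B := fun s => ‖w T‖ + ε / 2 * Real.exp (β * s))
      (B' := fun s => ε / 2 * (Real.exp (β * s) * β))
      (fun s hs => (hw s hs.1).continuousAt.continuousWithinAt)
      (fun s hs => (hw s hs.1).hasDerivWithinAt)
      (by simp only [le_add_iff_nonneg_right]; positivity)
      (fun s => (((hasDerivAt_id s).const_mul β).exp.const_mul (ε / 2)).const_add _
        |>.congr_deriv (by simp))
      (fun s hs => ?_) ⟨ht, le_rfl⟩
    rw [norm_mul, hnorm_exp]
    nlinarith [(hT s hs.1).2, Real.exp_pos (β * s)]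
  have hdecay : ∀ᶠ t in atTop, Real.exp (-(β * t)) * ‖w T‖ < ε / 2 := by
    have : Tendsto (fun t => Real.exp (-(β * t)) * ‖w T‖) atTop (𝓝 0) := by
      simpa using (Real.tendsto_exp_neg_atTop_nhds_zero.comp
        (tendsto_id.const_mul_atTop hβ)).mul_const ‖w T‖
    exact this.eventually (gt_mem_nhds (by positivity))
  filter_upwards [hdecay, eventually_ge_atTop T] with t hsmall ht
  have hv_eq : ‖v t‖ = Real.exp (-(β * t)) * ‖w t‖ := by
    rw [norm_mul, hnorm_exp, ← mul_assoc, ← Real.exp_add, neg_add_cancel, Real.exp_zero, one_mul]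
  calc ‖v t‖ ≤ Real.exp (-(β * t)) * (‖w T‖ + ε / 2 * Real.exp (β * t)) := by
        rw [hv_eq]; gcongr; exact hw_le t ht
    _ = Real.exp (-(β * t)) * ‖w T‖ + ε / 2 := by
        rw [mul_add, mul_left_comm, ← Real.exp_add, neg_add_cancel, Real.exp_zero, mul_one]
    _ < ε := by linarith

theorem tendsto_div_neg_of_tendsto_deriv_sub_mul {z : ℂ} (hz : z.re < 0) {v v' : ℝ → ℂ} {L : ℂ}
    (hv : ∀ᶠ t in atTop, HasDerivAt v (v' t) t)
    (h : Tendsto (fun t => v' t - z * v t) atTop (𝓝 L)) :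
    Tendsto v atTop (𝓝 (L / -z)) := by
  have hz0 : z ≠ 0 := by rintro rfl; simp at hz
  have hshift : Tendsto (fun t => v t - L / -z) atTop (𝓝 0) := by
    refine tendsto_zero_of_hasDerivAt_eq_mul_add hz (g := fun t => v' t - z * v t - L) ?_
      (by simpa using h.sub_const L)
    filter_upwards [hv] with t ht
    refine (ht.sub_const _).congr_deriv ?_
    field_simp
    ring
  simpa using hshift.add_const (L / -z)

theorem eq_zero_of_tendsto_of_hasDerivAt {E : Type*} [NormedAddCommGroup E] [NormedSpace ℝ E]
    {f f' : ℝ → E} {L L' : E} (hf : ∀ᶠ t in atTop, HasDerivAt f (f' t) t)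
    (hfL : Tendsto f atTop (𝓝 L)) (hf'L : Tendsto f' atTop (𝓝 L')) : L' = 0 := by
  have hdiff : Tendsto (fun t => f (t + 1) - f t - L') atTop (𝓝 (-L')) := by
    simpa using ((hfL.comp (tendsto_atTop_add_const_right _ 1 tendsto_id)).sub hfL).sub_const L'
  rw [← norm_le_zero_iff, ← norm_neg]
  refine le_of_forall_pos_le_add fun ε hε => ?_
  rw [zero_add]
  obtain ⟨T, hT⟩ :=
    (hf.and (hf'L.eventually (Metric.closedBall_mem_nhds L' hε))).exists_forall_of_atTop
  refine le_of_tendsto hdiff.norm ((eventually_ge_atTop T).mono fun t ht => ?_)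
  -- By the mean value inequality for `s ↦ f s - s • L'`, the increment `f (t + 1) - f t` is
  -- `ε`-close to `L'`, while it tends to `0`.
  have hmvt := norm_image_sub_le_of_norm_deriv_le_segment' (f := fun s => f s - s • L')
    (f' := fun s => f' s - L') (C := ε)
    (fun s hs => (((hT s (ht.trans hs.1)).1.sub ((hasDerivAt_id s).smul_const L')).congr_deriv
      (by simp)).hasDerivWithinAt)
    (fun s hs => by rw [← dist_eq_norm]; exact (hT s (ht.trans hs.1)).2) (t + 1)
    ⟨by linarith, le_rfl⟩
  calc ‖f (t + 1) - f t - L'‖ = ‖f (t + 1) - (t + 1) • L' - (f t - t • L')‖ := by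
        rw [add_smul, one_smul]; congr 1; abel
    _ ≤ ε * (t + 1 - t) := hmvt
    _ = ε := by ring

open Polynomial

theorem degree_sum_C_mul_X_pow_lt {R : Type*} [Semiring R] (b : ℕ → R) (n : ℕ) :
    (∑ i ∈ Finset.range n, C (b i) * X ^ i).degree < (n : WithBot ℕ) := by
  rw [← mem_degreeLT]
  exact Submodule.sum_mem _ fun i hi => mem_degreeLT.2 <|
    (degree_C_mul_X_pow_le i (b i)).trans_lt (by exact_mod_cast Finset.mem_range.1 hi)

theorem monic_X_pow_add_sum_C_mul_X_pow {R : Type*} [Semiring R] (b : ℕ → R) (n : ℕ) :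
    (X ^ n + ∑ i ∈ Finset.range n, C (b i) * X ^ i).Monic :=
  monic_X_pow_add (degree_sum_C_mul_X_pow_lt b n)

theorem natDegree_X_pow_add_sum_C_mul_X_pow {R : Type*} [Semiring R] [Nontrivial R] (b : ℕ → R)
    (n : ℕ) : (X ^ n + ∑ i ∈ Finset.range n, C (b i) * X ^ i).natDegree = n := by
  rw [natDegree_add_eq_left_of_degree_lt
    (by rw [degree_X_pow]; exact degree_sum_C_mul_X_pow_lt b n), natDegree_X_pow]

/-- With `y (i + 1) = (y i)'`, `chainEval y q` is the differential operator `q(d/dt)` applied to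
`y 0`. -/
noncomputable def chainEval (y : ℕ → ℝ → ℂ) : ℂ[X] →ₗ[ℂ] ℝ → ℂ :=
  lsum fun i => LinearMap.toSpanSingleton ℂ (ℝ → ℂ) (y i)

section chainEval

variable {y : ℕ → ℝ → ℂ}

@[simp]
theorem chainEval_monomial (i : ℕ) (c : ℂ) : chainEval y (monomial i c) = c • y i := by
  simp [chainEval, sum_monomial_index]

@[simp]
theorem chainEval_X_pow (i : ℕ) : chainEval y (X ^ i) = y i := by
  rw [← monomial_one_right_eq_X_pow, chainEval_monomial, one_smul]

@[simp]
theorem chainEval_C_mul_X_pow (i : ℕ) (c : ℂ) : chainEval y (C c * X ^ i) = c • y i := by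
  rw [C_mul_X_pow_eq_monomial, chainEval_monomial]

theorem hasDerivAt_chainEval {n : ℕ} {t : ℝ} (hy : ∀ i < n, HasDerivAt (y i) (y (i + 1) t) t)
    {q : ℂ[X]} (hq : q.natDegree < n) :
    HasDerivAt (chainEval y q) (chainEval y (X * q) t) t := by
  rw [as_sum_range' q n hq, Finset.mul_sum]
  simp only [map_sum, X_mul_monomial, chainEval_monomial, Finset.sum_apply, Pi.smul_apply,
    smul_eq_mul]
  exact HasDerivAt.sum fun i hi => (hy i (Finset.mem_range.1 hi)).const_mul _

variable (y) in
def convergentPolys : Submodule ℂ ℂ[X] where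
  carrier := {q | ∃ L, Tendsto (chainEval y q) atTop (𝓝 L)}
  add_mem' := fun ⟨L, hL⟩ ⟨M, hM⟩ => ⟨L + M, by rw [map_add]; exact hL.add hM⟩
  zero_mem' := ⟨0, by rw [map_zero]; exact tendsto_const_nhds⟩
  smul_mem' c _ := fun ⟨L, hL⟩ => ⟨c • L, by rw [map_smul]; exact hL.const_smul c⟩

@[simp]
theorem mem_convergentPolys {q : ℂ[X]} :
    q ∈ convergentPolys y ↔ ∃ L, Tendsto (chainEval y q) atTop (𝓝 L) :=
  Iff.rfl

variable {n : ℕ}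

theorem mem_convergentPolys_of_X_sub_C_mul_mem
    (hy : ∀ᶠ t in atTop, ∀ i < n, HasDerivAt (y i) (y (i + 1) t) t)
    {z : ℂ} (hz : z.re < 0) {q : ℂ[X]} (hq : q.natDegree < n)
    (h : (X - C z) * q ∈ convergentPolys y) : q ∈ convergentPolys y := by
  obtain ⟨L, hL⟩ := h
  refine ⟨L / -z, tendsto_div_neg_of_tendsto_deriv_sub_mul hz
    (hy.mono fun t ht => hasDerivAt_chainEval ht hq) ?_⟩
  rw [sub_mul, C_mul', map_sub, map_smul] at hL
  exact hL

theorem X_pow_mul_mem_convergentPolys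
    (hy : ∀ᶠ t in atTop, ∀ i < n, HasDerivAt (y i) (y (i + 1) t) t)
    (s : Multiset ℂ) (hs : ∀ z ∈ s, z.re < 0) (q : ℂ[X])
    (hdeg : q.natDegree + Multiset.card s ≤ n)
    (hmem : q * (s.map fun z => X - C z).prod ∈ convergentPolys y) :
    ∀ i ≤ Multiset.card s, X ^ i * q ∈ convergentPolys y := by
  induction s using Multiset.induction_on generalizing q with
  | empty => simpa using hmem
  | cons z s ih =>
    rw [Multiset.card_cons] at hdeg ⊢
    rw [Multiset.map_cons, Multiset.prod_cons, ← mul_assoc, mul_comm q] at hmem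
    have hdeg_z : ((X - C z) * q).natDegree + Multiset.card s ≤ n := by
      have := natDegree_mul_le (p := X - C z) (q := q)
      rw [natDegree_X_sub_C] at this
      omega
    have hmul_z := ih (fun w hw => hs w (Multiset.mem_cons_of_mem hw)) _ hdeg_z hmem
    have hpeel (i : ℕ) (hi : i ≤ Multiset.card s) : X ^ i * q ∈ convergentPolys y := by
      refine mem_convergentPolys_of_X_sub_C_mul_mem hy (hs z (Multiset.mem_cons_self z s)) ?_
        (by rw [mul_left_comm]; exact hmul_z i hi)
      have := natDegree_mul_le (p := X ^ i) (q := q)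
      rw [natDegree_X_pow] at this
      omega
    intro i hi
    obtain hi | rfl := Nat.lt_or_eq_of_le hi
    · exact hpeel i (by omega)
    · have hsplit : X ^ (Multiset.card s + 1) * q =
          X ^ Multiset.card s * ((X - C z) * q) + z • (X ^ Multiset.card s * q) := by
        rw [smul_eq_C_mul]
        ring
      rw [hsplit]
      exact add_mem (hmul_z _ le_rfl) (Submodule.smul_mem _ z (hpeel _ le_rfl))


theorem exists_tendsto_of_monic_of_roots_re_neg
    (hy : ∀ᶠ t in atTop, ∀ i < n, HasDerivAt (y i) (y (i + 1) t) t) {P : ℂ[X]} (hPm : P.Monic)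
    (hPdeg : P.natDegree = n) (hroots : ∀ z ∈ P.roots, z.re < 0) (hP : P ∈ convergentPolys y) :
    ∀ i ≤ n, ∃ L, Tendsto (y i) atTop (𝓝 L) := by
  have hcard : Multiset.card P.roots = n := IsAlgClosed.card_roots_eq_natDegree.trans hPdeg
  intro i hi
  have hprod := prod_multiset_X_sub_C_of_monic_of_roots_card_eq hPm (hcard.trans hPdeg.symm)
  simpa using X_pow_mul_mem_convergentPolys hy P.roots hroots 1 (by simp [hcard])
    (by rwa [one_mul, hprod]) i (hcard ▸ hi)

theorem exists_tendsto_of_roots_re_neg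
    (hy : ∀ᶠ t in atTop, ∀ i < n, HasDerivAt (y i) (y (i + 1) t) t) {b : ℕ → ℂ}
    (hroots : ∀ z : ℂ, z ^ n + ∑ i ∈ Finset.range n, b i * z ^ i = 0 → z.re < 0) {c : ℂ}
    (hlim : Tendsto (fun t => ∑ i ∈ Finset.range n, b i * y i t + y n t) atTop (𝓝 c)) :
    ∀ i ≤ n, ∃ L, Tendsto (y i) atTop (𝓝 L) := by
  set P : ℂ[X] := X ^ n + ∑ i ∈ Finset.range n, C (b i) * X ^ i
  have hPm : P.Monic := monic_X_pow_add_sum_C_mul_X_pow b n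
  have hPy : chainEval y P = fun t => ∑ i ∈ Finset.range n, b i * y i t + y n t := by
    ext t
    simp [P, add_comm]
  exact exists_tendsto_of_monic_of_roots_re_neg hy hPm (natDegree_X_pow_add_sum_C_mul_X_pow b n)
    (fun z hz => hroots z (by simpa [P, eval_finsetSum] using (mem_roots hPm.ne_zero).1 hz))
    ⟨c, hPy ▸ hlim⟩

theorem tendsto_of_roots_re_neg
    (hy : ∀ᶠ t in atTop, ∀ i < n, HasDerivAt (y i) (y (i + 1) t) t) (hn : n ≠ 0) {b : ℕ → ℂ}
    (hroots : ∀ z : ℂ, z ^ n + ∑ i ∈ Finset.range n, b i * z ^ i = 0 → z.re < 0) {c : ℂ}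
    (hlim : Tendsto (fun t => ∑ i ∈ Finset.range n, b i * y i t + y n t) atTop (𝓝 c)) :
    Tendsto (y 0) atTop (𝓝 (c / b 0)) ∧ ∀ i, 1 ≤ i → i ≤ n → Tendsto (y i) atTop (𝓝 0) := by
  choose! L hL using exists_tendsto_of_roots_re_neg hy hroots hlim
  have hL_zero (i : ℕ) (hi1 : 1 ≤ i) (hi : i ≤ n) : L i = 0 := by
    refine eq_zero_of_tendsto_of_hasDerivAt (hy.mono fun t ht => ?_) (hL (i - 1) (by omega))
      (hL i hi)
    simpa [Nat.sub_add_cancel hi1] using ht (i - 1) (by omega)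
  have h0 : 0 ∈ Finset.range n := Finset.mem_range.2 (Nat.pos_of_ne_zero hn)
  have hb : b 0 ≠ 0 := by
    intro hb
    have hsum : ∑ i ∈ Finset.range n, b i * 0 ^ i = b 0 := by
      rw [Finset.sum_eq_single_of_mem 0 h0 fun i _ hi => by simp [hi], pow_zero, mul_one]
    simpa [zero_pow hn, hsum, hb] using hroots 0
  have hc : b 0 * L 0 = c := by
    refine tendsto_nhds_unique ?_ hlim
    have hsum : ∑ i ∈ Finset.range n, b i * L i + L n = b 0 * L 0 := by
      rw [Finset.sum_eq_single_of_mem 0 h0 fun i hi hi0 => by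
        rw [hL_zero i (by omega) (Finset.mem_range.1 hi).le, mul_zero],
        hL_zero n (by omega) le_rfl, add_zero]
    rw [← hsum]
    exact (tendsto_finsetSum _ fun i hi =>
      (hL i (Finset.mem_range.1 hi).le).const_mul (b i)).add (hL n le_rfl)
  refine ⟨?_, fun i hi1 hi => hL_zero i hi1 hi ▸ hL i hi⟩
  rw [← hc, mul_div_cancel_left₀ _ hb]
  exact hL 0 (Nat.zero_le n)

end chainEval

/-- If all complex roots of `s^(m-1) + a_{m-1} s^(m-2) + ⋯ + a₁` have negative real part,
`x₁,…,x_m` form an integrator chain (`xⱼ′ = x_{j+1}`) on `[0,∞)`, and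
`a₁x₁ + ⋯ + a_{m−1}x_{m−1} + x_m → c`, then `x₁ → c/a₁` and `xⱼ → 0` for `j = 2,…,m`. -/
theorem integrator_chain_convergence
    (m : ℕ) (hm : 2 ≤ m) (a : ℕ → ℝ)
    (hroots : ∀ z : ℂ,
      z ^ (m - 1) + ∑ i ∈ Finset.range (m - 1), (a (i + 1) : ℂ) * z ^ i = 0 → z.re < 0)
    (x : ℕ → ℝ → ℝ)
    (hchain : ∀ j : ℕ, 1 ≤ j → j ≤ m - 1 → ∀ t : ℝ, 0 ≤ t →
      HasDerivAt (x j) (x (j + 1) t) t)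
    (c : ℝ)
    (hlim : Tendsto
      (fun t => (∑ i ∈ Finset.range (m - 1), a (i + 1) * x (i + 1) t) + x m t)
      atTop (nhds c)) :
    Tendsto (x 1) atTop (nhds (c / a 1)) ∧
      ∀ j : ℕ, 2 ≤ j → j ≤ m → Tendsto (x j) atTop (nhds 0) := by
  have hm1 : m - 1 + 1 = m := by omega
  set y : ℕ → ℝ → ℂ := fun i t => x (i + 1) t
  have hy : ∀ᶠ t in atTop, ∀ i < m - 1, HasDerivAt (y i) (y (i + 1) t) t :=
    (eventually_ge_atTop 0).mono fun t ht i hi =>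
      (hchain (i + 1) (by omega) (by omega) t ht).ofReal_comp
  have hlimC : Tendsto
      (fun t => ∑ i ∈ Finset.range (m - 1), (a (i + 1) : ℂ) * y i t + y (m - 1) t) atTop (𝓝 c) := by
    simpa [y, hm1] using hlim.ofReal
  obtain ⟨hy0, hy_zero⟩ := tendsto_of_roots_re_neg hy (by omega) hroots hlimC
  refine ⟨tendsto_ofReal_iff.1 (by simpa [y] using hy0), fun j hj2 hj => tendsto_ofReal_iff.1 ?_⟩
  simpa [y, Nat.sub_add_cancel (by omega : 1 ≤ j)] using hy_zero (j - 1) (by omega) (by omega)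
end

section
/- (Discrete-time first-order robust consensus.) Let N ≥ 1 and let α : ℕ → (Fin N → Fin N → ℝ) satisfy α[k] i j ≥ 0 for all k, i, j, take only finitely many distinct values, and satisfy: there exists M ∈ ℕ such that for every k ∈ ℕ there is an index i₀ such that every index j is reachable from i₀ under the reflexive–transitive closure of the relation E_k, where E_k(p,q) holds iff there exists l ∈ {k, k+1, …, k+M} with α[l] q p > 0. Let C_e > 0 and 0 < ρ < 1, and let ω : ℕ → (Fin N → ℝ) satisfy |ω[k] i| ≤ C_e ρ^k for all k and i. Let z : ℕ → (Fin N → ℝ) satisfy, for all k and all i, z[k+1] i = z[k] i + (1/(1 + ∑_j α[k] i j)) ∑_j α[k] i j (z[k] j − z[k] i) + ω[k] i. Then there exists z* ∈ ℝ such that lim_{k→∞} z[k] i = z* for every index i. -/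
/-!
Write the update as `z(k+1) = W(k) z(k) + ω(k)` with row-stochastic `W(k)`; as there are finitely
many weight matrices, some `γ > 0` lies below every positive entry, the diagonal included. Starting
at a time `a`, with `V` and `I` the maximum and minimum of `z(a)`, say that an agent is below the
envelope at time `t` when it lies `γ^(t-a) (V - I)/2` below `V + ∑_{a ≤ s < t} |ω(s)|`. Such an
agent stays below the envelope and pulls its out-neighbours below it; the same holds for `-z` with
`-I`. At time `a` every agent is below one of the two envelopes, and in each window of `M + 1`
steps the side containing the root gains an agent, so after `N (M + 1)` steps one side contains
everybody. Hence the spread `max - min` contracts by the factor `1 - γ^(N(M+1))/2` up to the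
disturbance tail, and tends to zero. Since later states stay in the current range up to that tail,
each trajectory is Cauchy.
-/

open Filter Finset Topology

lemma Relation.ReflTransGen.exists_rel_across {α : Type*} {r : α → α → Prop} {P : α → Prop}
    {a b : α} (h : Relation.ReflTransGen r a b) (ha : P a) (hb : ¬ P b) :
    ∃ p q, P p ∧ ¬ P q ∧ r p q := by
  induction h with
  | refl => exact absurd ha hb
  | @tail c d _ hcd ih =>
    by_cases hc : P c
    · exact ⟨c, d, hc, hb, hcd⟩
    · exact ih hc

lemma exists_pos_le_of_finite_range {β : Type*} {f : β → ℝ} (hf : (Set.range f).Finite) :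
    ∃ γ > 0, ∀ b, 0 < f b → γ ≤ f b := by
  set s := Set.range f ∩ Set.Ioi 0
  rcases s.eq_empty_or_nonempty with hs | hs
  · exact ⟨1, one_pos, fun b hb => (Set.eq_empty_iff_forall_notMem.1 hs _ ⟨⟨b, rfl⟩, hb⟩).elim⟩
  · obtain ⟨γ, ⟨_, hγ⟩, hmin⟩ := Set.exists_min_image s id (hf.inter_of_left _) hs
    exact ⟨γ, hγ, fun b hb => hmin (f b) ⟨⟨b, rfl⟩, hb⟩⟩

lemma Finset.eq_univ_or_eq_univ_of_ssubset {ι : Type*} [Fintype ι] [DecidableEq ι]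
    {L H : ℕ → Finset ι} (hL : Monotone L) (hH : Monotone H) (hcover : L 0 ∪ H 0 = univ)
    (hgrow : ∀ r, L r ≠ univ → H r ≠ univ → L r ⊂ L (r + 1) ∨ H r ⊂ H (r + 1)) :
    L (Fintype.card ι) = univ ∨ H (Fintype.card ι) = univ := by
  by_contra! hfull
  obtain ⟨hLN, hHN⟩ := hfull
  have hcard : ∀ r ≤ Fintype.card ι, Fintype.card ι + r ≤ #(L r) + #(H r) := by
    intro r
    induction r with
    | zero => intro _; simpa [← card_univ, ← hcover] using card_union_le (L 0) (H 0)
    | succ r ih =>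
      intro hr
      have hLr : L r ≠ univ := fun h =>
        hLN (eq_univ_of_forall fun i => hL (by omega) (h ▸ mem_univ i))
      have hHr : H r ≠ univ := fun h =>
        hHN (eq_univ_of_forall fun i => hH (by omega) (h ▸ mem_univ i))
      have := ih (by omega)
      have := card_le_card (hL (Nat.le_add_right r 1))
      have := card_le_card (hH (Nat.le_add_right r 1))
      rcases hgrow r hLr hHr with h | h
      · have := card_lt_card h; omega
      · have := card_lt_card h; omega
  have := hcard _ le_rfl
  have := card_le_univ (L (Fintype.card ι))
  have := card_le_univ (H (Fintype.card ι))
  exact hLN ((card_eq_iff_eq_univ _).1 (by omega))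

lemma sum_mul_le_sub_mul {ι : Type*} [Fintype ι] {w x : ι → ℝ} {B c : ℝ} {p : ι}
    (hw : ∀ j, 0 ≤ w j) (hw1 : ∑ j, w j = 1) (hx : ∀ j, x j ≤ B) (hp : x p ≤ B - c) :
    ∑ j, w j * x j ≤ B - w p * c := by
  classical
  calc ∑ j, w j * x j ≤ ∑ j, w j * (B - if j = p then c else 0) := by
        refine sum_le_sum fun j _ => mul_le_mul_of_nonneg_left ?_ (hw j)
        split_ifs with h
        · exact h ▸ hp
        · simpa using hx j
    _ = B - w p * c := by simp [mul_sub, sum_sub_distrib, ← sum_mul, hw1]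

lemma tendsto_zero_of_le_mul_add {d c : ℕ → ℝ} {μ : ℝ} (hd : ∀ r, 0 ≤ d r) (hμ0 : 0 ≤ μ)
    (hμ1 : μ < 1) (hc : Tendsto c atTop (𝓝 0)) (h : ∀ r, d (r + 1) ≤ μ * d r + c r) :
    Tendsto d atTop (𝓝 0) := by
  refine tendsto_order.2 ⟨fun a ha => .of_forall fun r => ha.trans_le (hd r), fun ε hε => ?_⟩
  obtain ⟨r₀, hr₀⟩ := eventually_atTop.1
    (hc.eventually (ge_mem_nhds (show (0 : ℝ) < (1 - μ) * (ε / 2) by nlinarith)))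
  have hiter : ∀ n, d (r₀ + n) ≤ μ ^ n * d r₀ + ε / 2 := by
    intro n
    induction n with
    | zero => simp only [add_zero, pow_zero, one_mul]; linarith
    | succ n ih =>
      calc d (r₀ + n + 1) ≤ μ * d (r₀ + n) + c (r₀ + n) := h _
        _ ≤ μ * (μ ^ n * d r₀ + ε / 2) + (1 - μ) * (ε / 2) := by
          gcongr
          exact hr₀ _ (by omega)
        _ = μ ^ (n + 1) * d r₀ + ε / 2 := by ring
  obtain ⟨n₀, hn₀⟩ := eventually_atTop.1
    (((tendsto_pow_atTop_nhds_zero_of_lt_one hμ0 hμ1).mul_const (d r₀)).eventually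
      (gt_mem_nhds (show 0 * d r₀ < ε / 2 by linarith)))
  refine eventually_atTop.2 ⟨r₀ + n₀, fun r hr => ?_⟩
  obtain ⟨n, rfl⟩ := Nat.exists_eq_add_of_le (le_trans (Nat.le_add_right _ _) hr)
  linarith [hiter n, hn₀ n (by omega)]

section Spread

variable {ι : Type*}

noncomputable def spread (x : ι → ℝ) : ℝ := (⨆ i, x i) - ⨅ i, x i

lemma spread_le_of_forall [Nonempty ι] {x : ι → ℝ} {a b : ℝ} (ha : ∀ i, x i ≤ a)
    (hb : ∀ i, b ≤ x i) : spread x ≤ a - b :=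
  sub_le_sub (ciSup_le ha) (le_ciInf hb)

lemma abs_sub_le_spread [Finite ι] (x : ι → ℝ) (i j : ι) : |x i - x j| ≤ spread x := by
  have hi := le_ciSup (Finite.bddAbove_range x) i
  have hi' := ciInf_le (Finite.bddBelow_range x) i
  have hj := le_ciSup (Finite.bddAbove_range x) j
  have hj' := ciInf_le (Finite.bddBelow_range x) j
  rw [spread, abs_le]
  constructor <;> linarith

lemma spread_nonneg [Finite ι] (x : ι → ℝ) (i : ι) : 0 ≤ spread x := by
  simpa using abs_sub_le_spread x i i

end Spread

section Consensus

variable {ι : Type*} {w : ℕ → ι → ι → ℝ} {γ : ℝ} {e : ℕ → ℝ} {y : ℕ → ι → ℝ} {B c : ℝ} {M : ℕ}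

def UniformlyJointlyQuasiStronglyConnected (w : ℕ → ι → ι → ℝ) (M : ℕ) : Prop :=
  ∀ k, ∃ r, ∀ j, Relation.ReflTransGen (fun p q => ∃ l, k ≤ l ∧ l ≤ k + M ∧ 0 < w l q p) r j

lemma UniformlyJointlyQuasiStronglyConnected.shift
    (hconn : UniformlyJointlyQuasiStronglyConnected w M) (a : ℕ) :
    UniformlyJointlyQuasiStronglyConnected (fun k => w (a + k)) M := by
  intro k
  obtain ⟨r, hr⟩ := hconn (a + k)
  refine ⟨r, fun j => Relation.ReflTransGen.mono ?_ _ _ (hr j)⟩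
  rintro p q ⟨l, hkl, hlM, hpos⟩
  exact ⟨l - a, by omega, by omega, by simpa only [Nat.add_sub_cancel' (by omega : a ≤ l)]⟩

variable [Fintype ι]

structure IsUniformAveraging (w : ℕ → ι → ι → ℝ) (γ : ℝ) : Prop where
  nonneg : ∀ k i j, 0 ≤ w k i j
  sum_eq_one : ∀ k i, ∑ j, w k i j = 1
  diag_pos : ∀ k i, 0 < w k i i
  le_of_pos : ∀ k i j, 0 < w k i j → γ ≤ w k i j

def IsPerturbedTrajectory (w : ℕ → ι → ι → ℝ) (e : ℕ → ℝ) (y : ℕ → ι → ℝ) : Prop :=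
  ∀ k i, |y (k + 1) i - ∑ j, w k i j * y k j| ≤ e k

noncomputable def belowEnvelope (y : ℕ → ι → ℝ) (e : ℕ → ℝ) (γ B c : ℝ) (t : ℕ) : Finset ι :=
  {i | y t i ≤ B + ∑ s ∈ range t, e s - γ ^ t * c}

namespace IsUniformAveraging

lemma le_one [Nonempty ι] (hw : IsUniformAveraging w γ) : γ ≤ 1 := by
  obtain ⟨i⟩ := ‹Nonempty ι›
  calc γ ≤ w 0 i i := hw.le_of_pos 0 i i (hw.diag_pos 0 i)
    _ ≤ ∑ j, w 0 i j := single_le_sum (fun j _ => hw.nonneg 0 i j) (mem_univ i)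
    _ = 1 := hw.sum_eq_one 0 i

lemma shift (hw : IsUniformAveraging w γ) (a : ℕ) :
    IsUniformAveraging (fun k => w (a + k)) γ :=
  ⟨fun k => hw.nonneg (a + k), fun k => hw.sum_eq_one (a + k), fun k => hw.diag_pos (a + k),
    fun k => hw.le_of_pos (a + k)⟩

end IsUniformAveraging

namespace IsPerturbedTrajectory

lemma shift (hy : IsPerturbedTrajectory w e y) (a : ℕ) :
    IsPerturbedTrajectory (fun k => w (a + k)) (fun k => e (a + k)) (fun k => y (a + k)) :=
  fun k => hy (a + k)

lemma neg (hy : IsPerturbedTrajectory w e y) : IsPerturbedTrajectory w e (-y) := by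
  intro k i
  simpa [sum_neg_distrib, neg_add_eq_sub, abs_sub_comm] using hy k i

lemma succ_le_sub (hy : IsPerturbedTrajectory w e y) (hw : IsUniformAveraging w γ) {t : ℕ}
    {i p : ι} {U : ℝ} (hU : ∀ j, y t j ≤ U) (hp : y t p ≤ U - c) (hc : 0 ≤ c)
    (hip : 0 < w t i p) : y (t + 1) i ≤ U - γ * c + e t := by
  have hstep := (abs_le.1 (hy t i)).2
  have hconv := sum_mul_le_sub_mul (hw.nonneg t i) (hw.sum_eq_one t i) hU hp
  have hγ := mul_le_mul_of_nonneg_right (hw.le_of_pos t i p hip) hc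
  linarith

lemma le_add_sum_range (hy : IsPerturbedTrajectory w e y) (hw : IsUniformAveraging w γ)
    (hB : ∀ j, y 0 j ≤ B) (t : ℕ) (i : ι) : y t i ≤ B + ∑ s ∈ range t, e s := by
  induction t generalizing i with
  | zero => simpa using hB i
  | succ t ih =>
    have := hy.succ_le_sub hw ih (by simpa using ih i) le_rfl (hw.diag_pos t i)
    rw [sum_range_succ]
    linarith

lemma mem_belowEnvelope_succ (hy : IsPerturbedTrajectory w e y) (hw : IsUniformAveraging w γ)
    (hγ : 0 ≤ γ) (hB : ∀ j, y 0 j ≤ B) (hc : 0 ≤ c) {t : ℕ} {i p : ι}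
    (hp : p ∈ belowEnvelope y e γ B c t) (hip : 0 < w t i p) :
    i ∈ belowEnvelope y e γ B c (t + 1) := by
  simp only [belowEnvelope, mem_filter, mem_univ, true_and] at hp ⊢
  have := hy.succ_le_sub hw (hy.le_add_sum_range hw hB t) hp (by positivity) hip
  rw [sum_range_succ, pow_succ]
  linarith

lemma monotone_belowEnvelope (hy : IsPerturbedTrajectory w e y) (hw : IsUniformAveraging w γ)
    (hγ : 0 ≤ γ) (hB : ∀ j, y 0 j ≤ B) (hc : 0 ≤ c) : Monotone (belowEnvelope y e γ B c) :=
  monotone_nat_of_le_succ fun t _ hi =>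
    hy.mem_belowEnvelope_succ hw hγ hB hc hi (hw.diag_pos t _)

lemma belowEnvelope_ssubset (hy : IsPerturbedTrajectory w e y) (hw : IsUniformAveraging w γ)
    (hγ : 0 ≤ γ) (hB : ∀ j, y 0 j ≤ B) (hc : 0 ≤ c) {t : ℕ} {r : ι}
    (hr : ∀ j, Relation.ReflTransGen (fun p q => ∃ l, t ≤ l ∧ l ≤ t + M ∧ 0 < w l q p) r j)
    (hrS : r ∈ belowEnvelope y e γ B c t) (hS : belowEnvelope y e γ B c t ≠ univ) :
    belowEnvelope y e γ B c t ⊂ belowEnvelope y e γ B c (t + (M + 1)) := by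
  have hmono := hy.monotone_belowEnvelope hw hγ hB hc
  obtain ⟨j, -, hj⟩ := exists_of_ssubset (ssubset_univ_iff.2 hS)
  obtain ⟨p, q, hp, hq, l, htl, hlM, hpos⟩ := (hr j).exists_rel_across hrS hj
  have hq' := hy.mem_belowEnvelope_succ hw hγ hB hc (hmono htl hp) hpos
  exact (ssubset_iff_of_subset (hmono (by omega))).2 ⟨q, hmono (by omega) hq', hq⟩

lemma belowEnvelope_eq_univ_or [Nonempty ι] (hy : IsPerturbedTrajectory w e y)
    (hw : IsUniformAveraging w γ) (hγ : 0 ≤ γ)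
    (hconn : UniformlyJointlyQuasiStronglyConnected w M) :
    belowEnvelope y e γ (⨆ i, y 0 i) (spread (y 0) / 2) (Fintype.card ι * (M + 1)) = univ ∨
      belowEnvelope (-y) e γ (-⨅ i, y 0 i) (spread (y 0) / 2) (Fintype.card ι * (M + 1)) =
        univ := by
  classical
  set c := spread (y 0) / 2
  have hc : 0 ≤ c := div_nonneg (spread_nonneg (y 0) (Classical.arbitrary ι)) zero_le_two
  have hV : ∀ j, y 0 j ≤ ⨆ i, y 0 i := le_ciSup (Finite.bddAbove_range _)
  have hI : ∀ j, (-y) 0 j ≤ -⨅ i, y 0 i :=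
    fun j => neg_le_neg (ciInf_le (Finite.bddBelow_range _) j)
  set L := fun r => belowEnvelope y e γ (⨆ i, y 0 i) c (r * (M + 1))
  set H := fun r => belowEnvelope (-y) e γ (-⨅ i, y 0 i) c (r * (M + 1))
  have hmul : Monotone fun r : ℕ => r * (M + 1) := fun a b h => Nat.mul_le_mul_right _ h
  have hL : Monotone L := (hy.monotone_belowEnvelope hw hγ hV hc).comp hmul
  have hH : Monotone H := (hy.neg.monotone_belowEnvelope hw hγ hI hc).comp hmul
  -- every agent lies on one side of the midpoint of `y 0`
  have hcover : L 0 ∪ H 0 = univ := by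
    ext i
    simp only [L, H, c, spread, belowEnvelope, zero_mul, range_zero, sum_empty, pow_zero,
      mem_union, mem_filter, mem_univ, true_and, Pi.neg_apply, iff_true]
    by_contra! h
    linarith [h.1, h.2]
  refine eq_univ_or_eq_univ_of_ssubset hL hH hcover fun r hLr hHr => ?_
  obtain ⟨root, hroot⟩ := hconn (r * (M + 1))
  have hmem : root ∈ L r ∪ H r :=
    union_subset_union (hL r.zero_le) (hH r.zero_le) (hcover ▸ mem_univ root)
  simp only [L, H, Nat.succ_mul]
  rcases mem_union.1 hmem with h | h
  · exact .inl (hy.belowEnvelope_ssubset hw hγ hV hc hroot h hLr)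
  · exact .inr (hy.neg.belowEnvelope_ssubset hw hγ hI hc hroot h hHr)

lemma spread_card_mul_le [Nonempty ι] (hy : IsPerturbedTrajectory w e y)
    (hw : IsUniformAveraging w γ) (hγ : 0 ≤ γ)
    (hconn : UniformlyJointlyQuasiStronglyConnected w M) :
    spread (y (Fintype.card ι * (M + 1))) ≤
      (1 - γ ^ (Fintype.card ι * (M + 1)) / 2) * spread (y 0)
        + 2 * ∑ s ∈ range (Fintype.card ι * (M + 1)), e s := by
  set T := Fintype.card ι * (M + 1)
  set E := ∑ s ∈ range T, e s
  have hupper := hy.le_add_sum_range hw (le_ciSup (Finite.bddAbove_range _)) T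
  have hlower := hy.neg.le_add_sum_range hw
    (fun j => neg_le_neg (ciInf_le (Finite.bddBelow_range (y 0)) j)) T
  simp only [Pi.neg_apply] at hlower
  rcases hy.belowEnvelope_eq_univ_or hw hγ hconn with h | h <;>
    simp only [eq_univ_iff_forall, belowEnvelope, mem_filter, mem_univ, true_and,
      Pi.neg_apply] at h
  · calc spread (y T)
        ≤ ((⨆ i, y 0 i) + E - γ ^ T * (spread (y 0) / 2)) - ((⨅ i, y 0 i) - E) :=
          spread_le_of_forall h fun i => by linarith [hlower i]
      _ = _ := by rw [spread]; ring
  · calc spread (y T)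
        ≤ ((⨆ i, y 0 i) + E) - ((⨅ i, y 0 i) - E + γ ^ T * (spread (y 0) / 2)) :=
          spread_le_of_forall hupper fun i => by linarith [h i]
      _ = _ := by rw [spread]; ring

lemma sum_range_le_tsum (he0 : ∀ k, 0 ≤ e k) (he : Summable e) (a t : ℕ) :
    ∑ s ∈ range t, e (a + s) ≤ ∑' k, e (a + k) :=
  Summable.sum_le_tsum _ (fun k _ => he0 _)
    (by simpa only [add_comm] using (summable_nat_add_iff a).2 he)

lemma le_add_tsum (hy : IsPerturbedTrajectory w e y) (hw : IsUniformAveraging w γ)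
    (he0 : ∀ k, 0 ≤ e k) (he : Summable e) {a : ℕ} (hB : ∀ j, y a j ≤ B) (t : ℕ) (i : ι) :
    y (a + t) i ≤ B + ∑' k, e (a + k) :=
  ((hy.shift a).le_add_sum_range (hw.shift a) hB t i).trans
    (by gcongr; exact sum_range_le_tsum he0 he a t)

lemma mem_Icc_iInf_sub_iSup_add (hy : IsPerturbedTrajectory w e y) (hw : IsUniformAveraging w γ)
    (he0 : ∀ k, 0 ≤ e k) (he : Summable e) (a t : ℕ) (i : ι) :
    y (a + t) i ∈ Set.Icc ((⨅ j, y a j) - ∑' k, e (a + k)) ((⨆ j, y a j) + ∑' k, e (a + k)) := by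
  have hlower := hy.neg.le_add_tsum hw he0 he
    (fun j => neg_le_neg (ciInf_le (Finite.bddBelow_range (y a)) j)) t i
  simp only [Pi.neg_apply] at hlower
  exact ⟨by linarith, hy.le_add_tsum hw he0 he (le_ciSup (Finite.bddAbove_range (y a))) t i⟩

lemma spread_add_le [Nonempty ι] (hy : IsPerturbedTrajectory w e y)
    (hw : IsUniformAveraging w γ) (he0 : ∀ k, 0 ≤ e k) (he : Summable e) (a t : ℕ) :
    spread (y (a + t)) ≤ spread (y a) + 2 * ∑' k, e (a + k) := by
  have h := hy.mem_Icc_iInf_sub_iSup_add hw he0 he a t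
  calc spread (y (a + t))
      ≤ ((⨆ j, y a j) + ∑' k, e (a + k)) - ((⨅ j, y a j) - ∑' k, e (a + k)) :=
        spread_le_of_forall (fun i => (h i).2) fun i => (h i).1
    _ = _ := by rw [spread]; ring

lemma spread_add_card_mul_le [Nonempty ι] (hy : IsPerturbedTrajectory w e y)
    (hw : IsUniformAveraging w γ) (hγ : 0 ≤ γ)
    (hconn : UniformlyJointlyQuasiStronglyConnected w M) (he0 : ∀ k, 0 ≤ e k)
    (he : Summable e) (a : ℕ) :
    spread (y (a + Fintype.card ι * (M + 1))) ≤
      (1 - γ ^ (Fintype.card ι * (M + 1)) / 2) * spread (y a) + 2 * ∑' k, e (a + k) := by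
  have := (hy.shift a).spread_card_mul_le (hw.shift a) hγ (hconn.shift a)
  simp only [add_zero] at this
  linarith [sum_range_le_tsum he0 he a (Fintype.card ι * (M + 1))]

lemma tendsto_spread [Nonempty ι] (hy : IsPerturbedTrajectory w e y)
    (hw : IsUniformAveraging w γ) (hγ : 0 < γ)
    (hconn : UniformlyJointlyQuasiStronglyConnected w M) (he0 : ∀ k, 0 ≤ e k)
    (he : Summable e) : Tendsto (fun k => spread (y k)) atTop (𝓝 0) := by
  obtain ⟨i⟩ := ‹Nonempty ι›
  set T := Fintype.card ι * (M + 1)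
  have hT : 0 < T := by positivity
  have htail : Tendsto (fun a => 2 * ∑' k, e (a + k)) atTop (𝓝 0) := by
    simpa only [add_comm, mul_zero] using (tendsto_sum_nat_add e).const_mul 2
  have hγT : 0 < γ ^ T := pow_pos hγ T
  have hγT1 : γ ^ T ≤ 1 := pow_le_one₀ hγ.le hw.le_one
  have hblocks : Tendsto (fun r => spread (y (r * T))) atTop (𝓝 0) := by
    refine tendsto_zero_of_le_mul_add (μ := 1 - γ ^ T / 2) (fun r => spread_nonneg _ i)
      (by linarith) (by linarith) (htail.comp (tendsto_id.atTop_mul_const' hT)) fun r => ?_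
    show spread (y ((r + 1) * T)) ≤ _
    rw [Nat.succ_mul]
    exact hy.spread_add_card_mul_le hw hγ.le hconn he0 he (r * T)
  have hdiv := Nat.tendsto_div_const_atTop hT.ne'
  have hfloor : Tendsto (fun k => k / T * T) atTop atTop :=
    tendsto_atTop_mono (fun k => Nat.le_mul_of_pos_right _ hT) hdiv
  refine squeeze_zero (fun k => spread_nonneg _ i) (fun k => ?_)
    (by simpa using (hblocks.comp hdiv).add (htail.comp hfloor))
  simpa only [Nat.div_add_mod'] using hy.spread_add_le hw he0 he (k / T * T) (k % T)

theorem exists_forall_tendsto [Nonempty ι] (hy : IsPerturbedTrajectory w e y)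
    (hw : IsUniformAveraging w γ) (hγ : 0 < γ)
    (hconn : UniformlyJointlyQuasiStronglyConnected w M) (he0 : ∀ k, 0 ≤ e k)
    (he : Summable e) : ∃ x, ∀ i, Tendsto (fun k => y k i) atTop (𝓝 x) := by
  have hspread := hy.tendsto_spread hw hγ hconn he0 he
  have hdist : ∀ i n m, n ≤ m → dist (y n i) (y m i) ≤ spread (y n) + ∑' k, e (n + k) := by
    intro i n m hnm
    obtain ⟨t, rfl⟩ := Nat.exists_eq_add_of_le hnm
    have h := hy.mem_Icc_iInf_sub_iSup_add hw he0 he n t i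
    have := le_ciSup (Finite.bddAbove_range (y n)) i
    have := ciInf_le (Finite.bddBelow_range (y n)) i
    rw [Real.dist_eq, abs_le, spread]
    constructor <;> linarith [h.1, h.2]
  obtain ⟨i₀⟩ := ‹Nonempty ι›
  obtain ⟨x, hx⟩ := cauchySeq_tendsto_of_complete <| cauchySeq_of_le_tendsto_0' _ (hdist i₀)
    (by simpa only [add_comm, add_zero] using hspread.add (tendsto_sum_nat_add e))
  refine ⟨x, fun i => ?_⟩
  have hclose : Tendsto (fun k => y k i - y k i₀) atTop (𝓝 0) :=
    squeeze_zero_norm (fun k => abs_sub_le_spread (y k) i i₀) hspread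
  simpa using hclose.add hx

end IsPerturbedTrajectory

end Consensus

section NeighborAverage

variable {ι : Type*} [Fintype ι] [DecidableEq ι] {a : ι → ℝ}

noncomputable def neighborAverageWeight (a : ι → ℝ) (i j : ι) : ℝ :=
  (a j + if j = i then 1 else 0) / (1 + ∑ l, a l)

lemma neighborAverageWeight_pos (ha : ∀ j, 0 ≤ a j) {i j : ι} (hj : 0 < a j ∨ j = i) :
    0 < neighborAverageWeight a i j := by
  have := sum_nonneg fun l (_ : l ∈ univ) => ha l
  unfold neighborAverageWeight
  rcases hj with hj | rfl
  · split_ifs <;> positivity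
  · have := ha j
    rw [if_pos rfl]
    positivity

lemma neighborAverageWeight_nonneg (ha : ∀ j, 0 ≤ a j) (i j : ι) :
    0 ≤ neighborAverageWeight a i j := by
  have := ha j
  have := sum_nonneg fun l (_ : l ∈ univ) => ha l
  unfold neighborAverageWeight
  split_ifs <;> positivity

lemma sum_neighborAverageWeight (ha : ∀ j, 0 ≤ a j) (i : ι) :
    ∑ j, neighborAverageWeight a i j = 1 := by
  have := sum_nonneg fun l (_ : l ∈ univ) => ha l
  simp only [neighborAverageWeight, ← sum_div, sum_add_distrib, sum_ite_eq', mem_univ, if_true]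
  rw [add_comm, div_self (by positivity)]

lemma add_mul_sum_sub_eq_sum_neighborAverageWeight (ha : ∀ j, 0 ≤ a j) (x : ι → ℝ) (i : ι) :
    x i + 1 / (1 + ∑ j, a j) * ∑ j, a j * (x j - x i) =
      ∑ j, neighborAverageWeight a i j * x j := by
  have := sum_nonneg fun l (_ : l ∈ univ) => ha l
  simp only [neighborAverageWeight, div_mul_eq_mul_div, ← sum_div, add_mul, sum_add_distrib,
    ite_mul, one_mul, zero_mul, sum_ite_eq', mem_univ, if_true, mul_sub, sum_sub_distrib,
    ← sum_mul]
  field_simp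
  ring

lemma exists_isUniformAveraging_neighborAverageWeight {α : ℕ → ι → ι → ℝ}
    (hα : ∀ k i j, 0 ≤ α k i j) (hfin : (Set.range α).Finite) :
    ∃ γ > 0, IsUniformAveraging (fun k i j => neighborAverageWeight (α k i) i j) γ := by
  set g : (ι → ι → ℝ) × ι × ι → ℝ := fun p => neighborAverageWeight (p.1 p.2.1) p.2.1 p.2.2
  have hrange : (Set.range fun p : ℕ × ι × ι => g (α p.1, p.2)).Finite :=
    ((hfin.prod Set.finite_univ).image g).subset <| by
      rintro _ ⟨⟨k, q⟩, rfl⟩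
      exact ⟨(α k, q), ⟨⟨k, rfl⟩, trivial⟩, rfl⟩
  obtain ⟨γ, hγ, hle⟩ := exists_pos_le_of_finite_range hrange
  exact ⟨γ, hγ, fun k i => neighborAverageWeight_nonneg (hα k i) i,
    fun k i => sum_neighborAverageWeight (hα k i) i,
    fun k i => neighborAverageWeight_pos (hα k i) (.inr rfl), fun k i j => hle (k, i, j)⟩

end NeighborAverage

/-- **Lemma 3 (discrete-time first-order robust consensus).** For the discrete-time first-order
consensus dynamics `z[k+1]ᵢ = z[k]ᵢ + (1/(1+∑ⱼ αᵢⱼ[k])) ∑ⱼ αᵢⱼ[k](z[k]ⱼ − z[k]ᵢ) + ω[k]ᵢ` with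
nonnegative weights taking finitely many values, a uniformly jointly quasi-strongly connected
(in the discrete-time sense) switching topology, and a geometrically vanishing disturbance
`|ω[k]ᵢ| ≤ C_e ρ^k`, all states converge to a common limit. -/
theorem discrete_first_order_robust_consensus
    (N : ℕ) (hN : 1 ≤ N)
    (α : ℕ → Fin N → Fin N → ℝ)
    (hα : ∀ k i j, 0 ≤ α k i j)
    (hfin : (Set.range α).Finite)
    (hconn : ∃ M : ℕ, ∀ k : ℕ, ∃ i₀ : Fin N, ∀ j : Fin N,
      Relation.ReflTransGen
        (fun p q : Fin N => ∃ l : ℕ, k ≤ l ∧ l ≤ k + M ∧ 0 < α l q p) i₀ j)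
    (Ce ρ : ℝ) (hCe : 0 < Ce) (hρ0 : 0 < ρ) (hρ1 : ρ < 1)
    (ω : ℕ → Fin N → ℝ) (hω : ∀ k : ℕ, ∀ i : Fin N, |ω k i| ≤ Ce * ρ ^ k)
    (z : ℕ → Fin N → ℝ)
    (hz : ∀ k : ℕ, ∀ i : Fin N,
      z (k + 1) i = z k i +
        (1 / (1 + ∑ j, α k i j)) * ∑ j, α k i j * (z k j - z k i) + ω k i) :
    ∃ zstar : ℝ, ∀ i : Fin N, Tendsto (fun k => z k i) atTop (nhds zstar) := by
  obtain ⟨M, hM⟩ := hconn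
  have : Nonempty (Fin N) := ⟨⟨0, hN⟩⟩
  set w := fun k i j => neighborAverageWeight (α k i) i j
  obtain ⟨γ, hγ, hw⟩ := exists_isUniformAveraging_neighborAverageWeight hα hfin
  have hy : IsPerturbedTrajectory w (fun k => Ce * ρ ^ k) z := fun k i => by
    rw [hz, ← add_mul_sum_sub_eq_sum_neighborAverageWeight (hα k i)]
    simpa using hω k i
  have hconn : UniformlyJointlyQuasiStronglyConnected w M := fun k => by
    obtain ⟨r, hr⟩ := hM k
    refine ⟨r, fun j => Relation.ReflTransGen.mono ?_ _ _ (hr j)⟩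
    exact fun p q ⟨l, hkl, hlM, hpos⟩ =>
      ⟨l, hkl, hlM, neighborAverageWeight_pos (hα l q) (.inl hpos)⟩
  exact hy.exists_forall_tendsto hw hγ hconn (fun k => mul_nonneg hCe.le (pow_nonneg hρ0.le k))
    ((summable_geometric_of_lt_one hρ0.le hρ1).mul_left Ce)
end
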